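/- arXiv:2511.02313 — 6 statements merged into one kernel-verified Lean document; each statement's English description precedes it below -/
import Mathlib

section
/- Let q be a prime power and let d ≥ 1 and k ≥ 2 be integers. There exists a constant C > 0, depending only on k, such that the following holds. Let G = G(V,E) be a tree with vertex set V = {v_1, ..., v_{k+1}} (so |E| = k). If A_1, ..., A_{k+1} ⊆ 𝔽_q^d satisfy |A_i||A_j| ≥ C·q^{d+k-1} for every edge {v_i, v_j} ∈ E, then Π_G(A_1 × A_2 × ··· × A_{k+1}) contains every function α : E → 𝔽_q^* (equivalently, Π_G(A_1 × ··· × A_{k+1}) ⊇ (𝔽_q^*)^k, identifying functions E → 𝔽_q with vectors indexed by E). -/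
/-!
For a nonzero `a` and a set `B` of vectors, the second moment method shows that all but at most
`2 q^(d+1) / |B|` vectors `x` have a partner `y ∈ B` with `x ⬝ᵥ y = a`. Pruning every `A v`,
`k` times in a row, to the vectors having such a partner (for the label of the edge) in the pruned
set of each neighbour therefore keeps at least half of `A v`, because
`|A u| |A v| ≥ 8 (k + 1) q^(d+1)` on edges. Root the tree anywhere; a vector in the root's pruned
set then propagates down the tree, a vertex at depth `m` taking a partner of its parent's vector in
its own `(k - m)`-times pruned set. In a tree each non-root vertex has a unique parent, so these
choices never conflict.
-/

/-- The dot product on `𝔽_q^d`. -/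
def dotp {F : Type} [Field F] {d : ℕ} (x y : Fin d → F) : F := ∑ i, x i * y i

namespace SimpleGraph

variable {V : Type*} {G : SimpleGraph V}

theorem Connected.exists_adj_dist_eq_add_one (hG : G.Connected) {r v : V} (hv : v ≠ r) :
    ∃ u, G.Adj u v ∧ G.dist r v = G.dist r u + 1 := by
  obtain ⟨p, hp⟩ := hG.exists_walk_length_eq_dist v r
  obtain ⟨u, hvu, q, rfl⟩ := Walk.exists_eq_cons_of_ne hv p
  have hu : G.dist u r ≤ q.length := dist_le q
  have hv' : G.dist r v ≤ G.dist r u + G.dist u v := hvu.symm.reachable.dist_triangle_right r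
  rw [dist_eq_one_iff_adj.mpr hvu.symm] at hv'
  rw [Walk.length_cons] at hp
  rw [dist_comm] at hu hp
  exact ⟨u, hvu.symm, by omega⟩

theorem Connected.dist_lt_card [Fintype V] (hG : G.Connected) (u v : V) :
    G.dist u v < Fintype.card V :=
  let ⟨_, hp, hlen⟩ := hG.exists_path_of_dist u v
  hlen ▸ hp.length_lt

theorem IsTree.existsUnique_adj_dist_eq_add_one (hG : G.IsTree) {r v : V} (hv : v ≠ r) :
    ∃! u, G.Adj u v ∧ G.dist r v = G.dist r u + 1 := by
  obtain ⟨u, hu, h⟩ := hG.connected.exists_adj_dist_eq_add_one hv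
  refine ⟨u, ⟨hu, h⟩, fun u' ⟨hu', h'⟩ => ?_⟩
  obtain ⟨p, hp⟩ := hG.connected.exists_walk_length_eq_dist r u
  obtain ⟨p', hp'⟩ := hG.connected.exists_walk_length_eq_dist r u'
  have hpath : (p.concat hu).IsPath :=
    Walk.isPath_of_length_eq_dist _ (by rw [Walk.length_concat, hp, h])
  have hpath' : (p'.concat hu').IsPath :=
    Walk.isPath_of_length_eq_dist _ (by rw [Walk.length_concat, hp', h'])
  exact (Walk.concat_inj ((hG.existsUnique_path r v).unique hpath' hpath)).1

theorem IsTree.exists_of_step_of_dist_le (hG : G.IsTree) (r : V) {N : ℕ}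
    (hN : ∀ v, G.dist r v ≤ N) {X : Type*} (T : ℕ → V → Set X) (R : V → V → X → X → Prop)
    (hroot : (T N r).Nonempty)
    (hstep : ∀ n u v, G.Adj u v → ∀ x ∈ T (n + 1) u, ∃ y ∈ T n v, R u v x y) (m : ℕ) :
    ∃ x : V → X, (∀ v, G.dist r v ≤ m → x v ∈ T (N - G.dist r v) v) ∧
      ∀ u v, G.Adj u v → G.dist r v = G.dist r u + 1 → G.dist r v ≤ m → R u v (x u) (x v) := by
  induction m with
  | zero =>
    refine ⟨fun _ => hroot.some, fun v hv => ?_, fun u v _ h hv => by omega⟩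
    obtain rfl : v = r := (hG.connected.dist_eq_zero_iff.mp (Nat.le_zero.mp hv)).symm
    simpa using hroot.some_mem
  | succ m ih =>
    obtain ⟨x, hT, hx⟩ := ih
    have hchild : ∀ v, G.dist r v = m + 1 → ∃ y ∈ T (N - (m + 1)) v,
        ∀ u, G.Adj u v → G.dist r v = G.dist r u + 1 → R u v (x u) y := by
      intro v hv
      have hvr : v ≠ r := by rintro rfl; simp at hv
      obtain ⟨p, ⟨hp, hpv⟩, hunique⟩ := hG.existsUnique_adj_dist_eq_add_one hvr
      have hpT : x p ∈ T (N - (m + 1) + 1) p := by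
        have := hN v
        rw [show N - (m + 1) + 1 = N - G.dist r p by omega]
        exact hT p (by omega)
      obtain ⟨y, hy, hRy⟩ := hstep _ p v hp (x p) hpT
      exact ⟨y, hy, fun u hu huv => hunique u ⟨hu, huv⟩ ▸ hRy⟩
    choose y hyT hyR using hchild
    refine ⟨fun v => if hv : G.dist r v = m + 1 then y v hv else x v, fun v hv => ?_,
      fun u v huv h hv => ?_⟩
    · dsimp only
      split_ifs with hvm
      · exact hvm ▸ hyT v hvm
      · exact hT v (by omega)
    · dsimp only
      rw [dif_neg (show G.dist r u ≠ m + 1 by omega)]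
      split_ifs with hvm
      · exact hyR v hvm u huv h
      · exact hx u v huv h (by omega)

theorem IsTree.exists_forall_adj_of_step (hG : G.IsTree) (r : V) {N : ℕ}
    (hN : ∀ v, G.dist r v ≤ N) {X : Type*} (T : ℕ → V → Set X) (R : V → V → X → X → Prop)
    (hR : ∀ u v x y, R u v x y → R v u y x) (hroot : (T N r).Nonempty)
    (hstep : ∀ n u v, G.Adj u v → ∀ x ∈ T (n + 1) u, ∃ y ∈ T n v, R u v x y) :
    ∃ x : V → X, (∀ v, x v ∈ T (N - G.dist r v) v) ∧ ∀ u v, G.Adj u v → R u v (x u) (x v) := by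
  obtain ⟨x, hT, hx⟩ := hG.exists_of_step_of_dist_le r hN T R hroot hstep N
  refine ⟨x, fun v => hT v (hN v), fun u v huv => ?_⟩
  rcases hG.dist_eq_dist_add_one_of_adj r huv with h | h
  · exact hR _ _ _ _ (hx v u huv.symm h (hN u))
  · exact hx u v huv h (hN v)

end SimpleGraph

open Finset Matrix

theorem card_fiber_mul_card_eq_of_surjective {W M Φ : Type*} [AddGroup W] [Fintype W]
    [AddMonoid M] [Fintype M] [DecidableEq M] [FunLike Φ W M] [AddMonoidHomClass Φ W M]
    (f : Φ) (hf : Function.Surjective f) (m : M) :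
    #{w | f w = m} * Fintype.card M = Fintype.card W :=
  calc #{w | f w = m} * Fintype.card M = ∑ m' : M, #{w | f w = m'} := by
        rw [sum_congr rfl fun m' _ => AddMonoidHom.card_fiber_eq_of_mem_range f (hf m') (hf m),
          sum_const, card_univ, smul_eq_mul, mul_comm]
    _ = Fintype.card W := (card_eq_sum_card_fiberwise fun _ _ => mem_univ _).symm.trans card_univ

theorem LinearMap.card_fiber_mul_card_le_card_preimage_line {K W M : Type*} [Field K] [Fintype K]
    [AddCommGroup W] [Module K W] [Fintype W] [AddCommGroup M] [Module K M] [DecidableEq M]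
    (f : W →ₗ[K] M) {m : M} (hm : m ≠ 0) :
    #{w | f w = m} * Fintype.card K ≤ #{w | ∃ c : K, f w = c • m} := by
  classical
  by_cases hrange : m ∈ Set.range f
  · obtain ⟨w₀, rfl⟩ := hrange
    have hunion : ({w | ∃ c : K, f w = c • f w₀} : Finset W)
        = univ.biUnion fun c : K => {w | f w = c • f w₀} := by
      ext; simp
    have hdisj : ((univ : Finset K) : Set K).PairwiseDisjoint
        fun c => ({w | f w = c • f w₀} : Finset W) :=
      fun c _ c' _ hcc' => disjoint_filter.mpr fun w _ hc hc' =>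
        hcc' (smul_left_injective K hm (hc.symm.trans hc'))
    rw [hunion, card_biUnion hdisj, sum_congr rfl fun c _ =>
      AddMonoidHom.card_fiber_eq_of_mem_range f ⟨c • w₀, map_smul f c w₀⟩ ⟨w₀, rfl⟩,
      sum_const, card_univ, smul_eq_mul, mul_comm]
  · rw [card_eq_zero.mpr (filter_eq_empty_iff.mpr fun w _ hw => hrange ⟨w, hw⟩), zero_mul]
    exact Nat.zero_le _

section DotProductCount

variable {K ι : Type*} [Field K] [Fintype ι] [DecidableEq ι]

theorem dotProduct_left_surjective {y : ι → K} (hy : y ≠ 0) :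
    Function.Surjective fun x : ι → K => x ⬝ᵥ y := by
  obtain ⟨i, hi⟩ : ∃ i, y i ≠ 0 := Function.ne_iff.mp hy
  exact fun a => ⟨Pi.single i (a / y i), by simp [single_dotProduct, hi]⟩

variable [Fintype K] [DecidableEq K]

theorem card_filter_dotProduct_eq_mul_card {y : ι → K} (hy : y ≠ 0) (a : K) :
    #{x : ι → K | x ⬝ᵥ y = a} * Fintype.card K = Fintype.card (ι → K) :=
  card_fiber_mul_card_eq_of_surjective ((dotProductBilin K K).flip y)
    (dotProduct_left_surjective hy) a

theorem card_filter_dotProduct_eq_and_eq_mul_card_sq_le {y y' : ι → K} (hne : y ≠ y') {a : K}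
    (ha : a ≠ 0) :
    #{x : ι → K | x ⬝ᵥ y = a ∧ x ⬝ᵥ y' = a} * Fintype.card K ^ 2 ≤ Fintype.card (ι → K) := by
  let f := ((dotProductBilin K K).flip y).prod ((dotProductBilin K K).flip y')
  have hpair := LinearMap.card_fiber_mul_card_le_card_preimage_line f (m := (a, a)) (by simp [ha])
  have hline : ({x | ∃ c : K, f x = c • (a, a)} : Finset (ι → K))
      ⊆ ({x | x ⬝ᵥ (y - y') = 0} : Finset (ι → K)) := by
    intro x
    simp +contextual [f, dotProduct_sub]
  calc #{x : ι → K | x ⬝ᵥ y = a ∧ x ⬝ᵥ y' = a} * Fintype.card K ^ 2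
      = #{x | f x = (a, a)} * Fintype.card K * Fintype.card K := by
        simp [f, sq, mul_assoc]
    _ ≤ #{x : ι → K | x ⬝ᵥ (y - y') = 0} * Fintype.card K :=
        Nat.mul_le_mul_right _ (hpair.trans (card_le_card hline))
    _ = Fintype.card (ι → K) := card_filter_dotProduct_eq_mul_card (sub_ne_zero.mpr hne) 0

theorem sum_card_filter_dotProduct_eq_mul_card {B : Finset (ι → K)} (hB : (0 : ι → K) ∉ B)
    (a : K) :
    (∑ x : ι → K, #{y ∈ B | x ⬝ᵥ y = a}) * Fintype.card K = #B * Fintype.card (ι → K) := by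
  rw [show ∑ x : ι → K, #{y ∈ B | x ⬝ᵥ y = a} = ∑ y ∈ B, #{x : ι → K | x ⬝ᵥ y = a} from
    sum_card_bipartiteAbove_eq_sum_card_bipartiteBelow _, sum_mul,
    sum_congr rfl fun y hy => card_filter_dotProduct_eq_mul_card (ne_of_mem_of_not_mem hy hB) a,
    sum_const, smul_eq_mul]

theorem sum_card_filter_dotProduct_sq_mul_card_sq_le {B : Finset (ι → K)}
    (hB : (0 : ι → K) ∉ B) {a : K} (ha : a ≠ 0) :
    (∑ x : ι → K, #{y ∈ B | x ⬝ᵥ y = a} ^ 2) * Fintype.card K ^ 2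
      ≤ #B * Fintype.card K * Fintype.card (ι → K) + #B ^ 2 * Fintype.card (ι → K) := by
  have hpairs : ∀ x : ι → K, #{y ∈ B | x ⬝ᵥ y = a} ^ 2
      = #{p ∈ B ×ˢ B | x ⬝ᵥ p.1 = a ∧ x ⬝ᵥ p.2 = a} := by
    intro x
    rw [sq, ← card_product, ← filter_product]
  have hterm : ∀ p ∈ B ×ˢ B, #{x : ι → K | x ⬝ᵥ p.1 = a ∧ x ⬝ᵥ p.2 = a} * Fintype.card K ^ 2
      ≤ (if p.1 = p.2 then Fintype.card K * Fintype.card (ι → K) else 0)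
        + Fintype.card (ι → K) := by
    rintro ⟨y, y'⟩ hp
    by_cases hyy' : y = y'
    · subst hyy'
      have hy : y ≠ 0 := ne_of_mem_of_not_mem (mem_product.mp hp).1 hB
      simp only [and_self, if_true]
      rw [sq, ← mul_assoc, card_filter_dotProduct_eq_mul_card hy, mul_comm]
      exact Nat.le_add_right _ _
    · rw [if_neg hyy', zero_add]
      exact card_filter_dotProduct_eq_and_eq_mul_card_sq_le hyy' ha
  calc (∑ x : ι → K, #{y ∈ B | x ⬝ᵥ y = a} ^ 2) * Fintype.card K ^ 2
      = ∑ p ∈ B ×ˢ B, #{x : ι → K | x ⬝ᵥ p.1 = a ∧ x ⬝ᵥ p.2 = a} * Fintype.card K ^ 2 := by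
        rw [sum_congr rfl fun x _ => hpairs x, ← sum_mul]
        congr 1
        exact sum_card_bipartiteAbove_eq_sum_card_bipartiteBelow _
    _ ≤ ∑ p ∈ B ×ˢ B, ((if p.1 = p.2 then Fintype.card K * Fintype.card (ι → K) else 0)
        + Fintype.card (ι → K)) := sum_le_sum hterm
    _ = #B * Fintype.card K * Fintype.card (ι → K) + #B ^ 2 * Fintype.card (ι → K) := by
        rw [sum_add_distrib, sum_product, sum_const, card_product]
        simp [sum_ite_eq, sq, mul_assoc]

/-- Second moment method: on the bad set the count `#{y ∈ B | x ⬝ᵥ y = a}` vanishes, whereas its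
variance around the mean `#B / q` is at most `#B * |ι → K| / q`. -/
theorem card_filter_forall_dotProduct_ne_mul_card_le {B : Finset (ι → K)}
    (hB : (0 : ι → K) ∉ B) {a : K} (ha : a ≠ 0) :
    #{x : ι → K | ∀ y ∈ B, x ⬝ᵥ y ≠ a} * #B ≤ Fintype.card K * Fintype.card (ι → K) := by
  set f : (ι → K) → ℕ := fun x => #{y ∈ B | x ⬝ᵥ y = a}
  set q := Fintype.card K
  set N := Fintype.card (ι → K)
  set n := #B
  have h1 : ((∑ x, f x : ℕ) : ℤ) * q = n * N := by
    exact_mod_cast sum_card_filter_dotProduct_eq_mul_card hB a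
  have h2 : ((∑ x, f x ^ 2 : ℕ) : ℤ) * q ^ 2 ≤ n * q * N + n ^ 2 * N := by
    exact_mod_cast sum_card_filter_dotProduct_sq_mul_card_sq_le hB ha
  have hvar : ∑ x, ((q : ℤ) * f x - n) ^ 2 ≤ n * q * N := by
    have : ∑ x, ((q : ℤ) * f x - n) ^ 2
        = ((∑ x, f x ^ 2 : ℕ) : ℤ) * q ^ 2 - 2 * n * (((∑ x, f x : ℕ) : ℤ) * q) + N * n ^ 2 := by
      simp only [sub_sq, sum_add_distrib, sum_sub_distrib, Nat.cast_sum, sum_mul, mul_sum,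
        sum_const, card_univ, nsmul_eq_mul, Nat.cast_pow]
      congr 2 <;> exact sum_congr rfl fun _ _ => by ring
    rw [this, h1]
    linarith
  have hbad : (#{x : ι → K | ∀ y ∈ B, x ⬝ᵥ y ≠ a} : ℤ) * n ^ 2 ≤ ∑ x, ((q : ℤ) * f x - n) ^ 2 :=
    calc (#{x : ι → K | ∀ y ∈ B, x ⬝ᵥ y ≠ a} : ℤ) * n ^ 2
        = ∑ x ∈ {x : ι → K | ∀ y ∈ B, x ⬝ᵥ y ≠ a}, ((q : ℤ) * f x - n) ^ 2 := by
          rw [sum_congr rfl fun x hx => by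
            rw [show f x = 0 from card_eq_zero.mpr (filter_eq_empty_iff.mpr (mem_filter.mp hx).2)],
            sum_const, nsmul_eq_mul]
          ring
      _ ≤ ∑ x, ((q : ℤ) * f x - n) ^ 2 :=
          sum_le_sum_of_subset_of_nonneg (subset_univ _) fun _ _ _ => sq_nonneg _
  rcases Nat.eq_zero_or_pos n with hn | hn
  · simp [hn]
  refine Nat.le_of_mul_le_mul_right ?_ hn
  have : ((#{x : ι → K | ∀ y ∈ B, x ⬝ᵥ y ≠ a} * n * n : ℕ) : ℤ) ≤ (q * N * n : ℕ) := by
    push_cast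
    linarith
  exact_mod_cast this

theorem card_filter_forall_dotProduct_ne_mul_card_le_two_mul (B : Finset (ι → K)) {a : K}
    (ha : a ≠ 0) :
    #{x : ι → K | ∀ y ∈ B, x ⬝ᵥ y ≠ a} * #B ≤ 2 * (Fintype.card K * Fintype.card (ι → K)) := by
  have herase : ({x | ∀ y ∈ B, x ⬝ᵥ y ≠ a} : Finset (ι → K))
      = ({x | ∀ y ∈ B.erase 0, x ⬝ᵥ y ≠ a} : Finset (ι → K)) := by
    ext x
    simp only [mem_filter, mem_univ, true_and, mem_erase]
    refine ⟨fun h y hy => h y hy.2, fun h y hy => ?_⟩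
    rcases eq_or_ne y 0 with rfl | hy0
    · simpa using ha.symm
    · exact h y ⟨hy0, hy⟩
  have hbound := card_filter_forall_dotProduct_ne_mul_card_le (notMem_erase 0 B) ha
  have hcard : #B ≤ #(B.erase 0) + 1 := by have := pred_card_le_card_erase (s := B) (a := 0); omega
  have hbad : #{x : ι → K | ∀ y ∈ B, x ⬝ᵥ y ≠ a} ≤ Fintype.card (ι → K) := card_le_univ _
  have hq : 1 ≤ Fintype.card K := Fintype.card_pos
  rw [herase] at hbad ⊢
  nlinarith

end DotProductCount

section SupportedSets

variable {K ι V : Type*} [Field K] [Fintype ι] (G : SimpleGraph V) (α : G.edgeSet → K)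
  (A : V → Finset (ι → K))

open scoped Classical in
noncomputable def supportedSets : ℕ → V → Finset (ι → K)
  | 0 => A
  | n + 1 => fun v => {x ∈ A v | ∀ c (h : G.Adj v c),
      ∃ y ∈ supportedSets n c, x ⬝ᵥ y = α ⟨s(v, c), G.mem_edgeSet.mpr h⟩}

theorem mem_supportedSets_succ {n : ℕ} {v : V} {x : ι → K} :
    x ∈ supportedSets G α A (n + 1) v ↔ x ∈ A v ∧ ∀ c (h : G.Adj v c),
      ∃ y ∈ supportedSets G α A n c, x ⬝ᵥ y = α ⟨s(v, c), G.mem_edgeSet.mpr h⟩ := by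
  simp [supportedSets]

theorem supportedSets_subset (n : ℕ) (v : V) : supportedSets G α A n v ⊆ A v := by
  cases n with
  | zero => exact Subset.rfl
  | succ n => exact fun _ hx => ((mem_supportedSets_succ G α A).mp hx).1

variable [Fintype K] [DecidableEq K] [DecidableEq ι] [Fintype V]

theorem two_mul_card_mul_card_filter_forall_dotProduct_ne_le (hα : ∀ e, α e ≠ 0)
    (hA : ∀ u v, G.Adj u v →
      8 * Fintype.card V * (Fintype.card K * Fintype.card (ι → K)) ≤ #(A u) * #(A v))
    {n : ℕ} (hn : ∀ c, #(A c) ≤ 2 * #(supportedSets G α A n c)) {v c : V} (h : G.Adj v c) :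
    2 * Fintype.card V * #{x : ι → K | ∀ y ∈ supportedSets G α A n c,
      x ⬝ᵥ y ≠ α ⟨s(v, c), G.mem_edgeSet.mpr h⟩} ≤ #(A v) := by
  set bad := ({x | ∀ y ∈ supportedSets G α A n c,
    x ⬝ᵥ y ≠ α ⟨s(v, c), G.mem_edgeSet.mpr h⟩} : Finset (ι → K))
  set M := Fintype.card K * Fintype.card (ι → K)
  have hcount : #bad * #(supportedSets G α A n c) ≤ 2 * M :=
    card_filter_forall_dotProduct_ne_mul_card_le_two_mul _ (hα _)
  have hAc : 0 < #(A c) := Nat.pos_of_ne_zero fun h0 => by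
    have : Nonempty V := ⟨v⟩
    simpa [h0, M, Fintype.card_ne_zero] using hA v c h
  refine Nat.le_of_mul_le_mul_right ?_ hAc
  calc 2 * Fintype.card V * #bad * #(A c)
      ≤ 2 * Fintype.card V * (2 * (#bad * #(supportedSets G α A n c))) := by
        rw [mul_assoc, mul_left_comm 2 #bad]
        exact Nat.mul_le_mul_left _ (Nat.mul_le_mul_left _ (hn c))
    _ ≤ 8 * Fintype.card V * M := by nlinarith
    _ ≤ #(A v) * #(A c) := hA v c h

theorem card_le_two_mul_card_supportedSets (hα : ∀ e, α e ≠ 0)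
    (hA : ∀ u v, G.Adj u v →
      8 * Fintype.card V * (Fintype.card K * Fintype.card (ι → K)) ≤ #(A u) * #(A v))
    (n : ℕ) (v : V) : #(A v) ≤ 2 * #(supportedSets G α A n v) := by
  induction n generalizing v with
  | zero => exact Nat.le_mul_of_pos_left _ two_pos
  | succ n ih =>
    classical
    let bad : V → Finset (ι → K) := fun c => {x | ∃ h : G.Adj v c,
      ∀ y ∈ supportedSets G α A n c, x ⬝ᵥ y ≠ α ⟨s(v, c), G.mem_edgeSet.mpr h⟩}
    have hcover : A v ⊆ supportedSets G α A (n + 1) v ∪ univ.biUnion bad := by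
      intro x hx
      by_cases hS : x ∈ supportedSets G α A (n + 1) v
      · exact mem_union_left _ hS
      · rw [mem_supportedSets_succ] at hS
        push Not at hS
        obtain ⟨c, h, hc⟩ := hS hx
        exact mem_union_right _ (mem_biUnion.mpr ⟨c, mem_univ _, by simpa [bad] using ⟨h, hc⟩⟩)
    have hbad : ∀ c, 2 * Fintype.card V * #(bad c) ≤ #(A v) := by
      intro c
      by_cases h : G.Adj v c
      · convert two_mul_card_mul_card_filter_forall_dotProduct_ne_le G α A hα hA ih h using 4
        exact ⟨fun ⟨_, hx⟩ => hx, fun hx => ⟨h, hx⟩⟩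
      · simp [bad, h]
    have hsum : 2 * ∑ c, #(bad c) ≤ #(A v) := by
      refine Nat.le_of_mul_le_mul_left ?_ (Fintype.card_pos_iff.mpr ⟨v⟩)
      calc Fintype.card V * (2 * ∑ c, #(bad c)) = ∑ c, 2 * Fintype.card V * #(bad c) := by
            rw [mul_sum, mul_sum]; exact sum_congr rfl fun _ _ => by ring
        _ ≤ ∑ _c : V, #(A v) := sum_le_sum fun c _ => hbad c
        _ = Fintype.card V * #(A v) := by rw [sum_const, card_univ, smul_eq_mul]
    have := (card_le_card hcover).trans
      ((card_union_le _ _).trans (Nat.add_le_add_left card_biUnion_le _))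
    omega

end SupportedSets

theorem SimpleGraph.IsTree.exists_forall_adj_dotProduct_eq {K ι V : Type*} [Field K] [Fintype K]
    [Fintype ι] [DecidableEq ι] [Fintype V] [Nontrivial V] {G : SimpleGraph V} (hG : G.IsTree)
    {α : G.edgeSet → K} (hα : ∀ e, α e ≠ 0) {A : V → Finset (ι → K)}
    (hA : ∀ u v, G.Adj u v →
      8 * Fintype.card V * (Fintype.card K * Fintype.card (ι → K)) ≤ #(A u) * #(A v)) :
    ∃ x : V → ι → K, (∀ v, x v ∈ A v) ∧
      ∀ u v (h : G.Adj u v), x u ⬝ᵥ x v = α ⟨s(u, v), G.mem_edgeSet.mpr h⟩ := by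
  classical
  obtain ⟨r, -⟩ := exists_pair_ne V
  obtain ⟨c, hc⟩ := hG.connected.preconnected.exists_adj_of_nontrivial r
  have hroot : (supportedSets G α A (Fintype.card V - 1) r).Nonempty := by
    have hAr : 0 < #(A r) := Nat.pos_of_ne_zero fun h0 => by
      simpa [h0, Fintype.card_ne_zero] using hA r c hc
    have := card_le_two_mul_card_supportedSets G α A hα hA (Fintype.card V - 1) r
    exact card_pos.mp (by omega)
  obtain ⟨x, hxS, hx⟩ := hG.exists_forall_adj_of_step r
    (fun v => Nat.le_sub_one_of_lt (hG.connected.dist_lt_card r v))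
    (fun n v => (supportedSets G α A n v : Set (ι → K)))
    (fun u v x y => ∀ h : G.Adj u v, x ⬝ᵥ y = α ⟨s(u, v), G.mem_edgeSet.mpr h⟩)
    (fun u v x y hxy hvu => by
      rw [dotProduct_comm, hxy hvu.symm]
      exact congrArg α (Subtype.ext Sym2.eq_swap))
    hroot
    (fun n u v huv x hx => by
      obtain ⟨y, hy, hxy⟩ := ((mem_supportedSets_succ G α A).mp hx).2 v huv
      exact ⟨y, hy, fun _ => hxy⟩)
  exact ⟨x, fun v => supportedSets_subset G α A _ v (hxS v), fun u v h => hx u v h h⟩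

/-- If `G` is a tree on `k+1` vertices (`d ≥ 1`, `k ≥ 2`) and
`|A_i||A_j| ≥ C q^{d+k-1}` for every edge `{v_i,v_j}`, then every function
`α : E → 𝔽_q^*` is attained, i.e. `Π_G(A_1 × ⋯ × A_{k+1}) ⊇ (𝔽_q^*)^k`;
here `C` depends only on `k`. -/
theorem stmt2 (k : ℕ) (hk : 2 ≤ k) :
    ∃ C : ℝ, 0 < C ∧
      ∀ (F : Type) [Field F] [Fintype F] (d : ℕ), 1 ≤ d →
      ∀ (G : SimpleGraph (Fin (k + 1))), G.IsTree →
      ∀ A : Fin (k + 1) → Finset (Fin d → F),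
        (∀ i j, G.Adj i j →
          C * (Fintype.card F : ℝ) ^ (d + k - 1) ≤ ((A i).card : ℝ) * ((A j).card : ℝ)) →
        ∀ α : G.edgeSet → F, (∀ e, α e ≠ 0) →
          ∃ x : Fin (k + 1) → Fin d → F, (∀ i, x i ∈ A i) ∧
            ∀ i j, ∀ h : G.Adj i j,
              dotp (x i) (x j) = α ⟨s(i, j), G.mem_edgeSet.mpr h⟩ := by
  refine ⟨8 * (k + 1), by positivity, fun F _ _ d _ G hG A hA α hα => ?_⟩
  have : Nontrivial (Fin (k + 1)) := Fin.nontrivial_iff_two_le.mpr (by omega)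
  refine hG.exists_forall_adj_dotProduct_eq hα fun u v huv => ?_
  rw [Fintype.card_fin, Fintype.card_fun, Fintype.card_fin, ← pow_succ']
  have hq : (1 : ℝ) ≤ Fintype.card F := by exact_mod_cast Fintype.card_pos
  exact_mod_cast (mul_le_mul_of_nonneg_left (pow_le_pow_right₀ hq (by omega : d + 1 ≤ d + k - 1))
    (by positivity : (0 : ℝ) ≤ 8 * (k + 1))).trans (hA u v huv)
end

section
/- Let q be a prime power, d ≥ 1 and ℓ ≥ 1 integers, and let A_1, A_2, ..., A_ℓ and A be subsets of 𝔽_q^d, with each A_j nonempty. Then ∑_{(x_1,...,x_ℓ) ∈ A_1 × ··· × A_ℓ} ∑_{(t_1,...,t_ℓ) ∈ 𝔽_q^ℓ} (Π^A_{x_1,...,x_ℓ}(t_1,...,t_ℓ))^2 ≤ (|A|^2 · ∏_{i=1}^ℓ |A_i|) / q^ℓ + q^d · |A| · (∏_{i=1}^ℓ |A_i|) · (∑_{j=1}^ℓ 1/|A_j|). -/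
open Finset Matrix

namespace AddChar

lemma map_sum_eq_prod {ι A M : Type*} [AddCommMonoid A] [CommMonoid M] (ψ : AddChar A M)
    (s : Finset ι) (f : ι → A) : ψ (∑ i ∈ s, f i) = ∏ i ∈ s, ψ (f i) :=
  map_prod ψ.toMonoidHom (fun i => Multiplicative.ofAdd (f i)) s

lemma IsPrimitive.sum_apply_dotProduct {F R ι : Type*} [Field F] [Fintype F] [DecidableEq F]
    [CommRing R] [IsDomain R] [Fintype ι] [DecidableEq ι] {ψ : AddChar F R}
    (hψ : ψ.IsPrimitive) (w : ι → F) :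
    ∑ u : ι → F, ψ (u ⬝ᵥ w) = if w = 0 then (Fintype.card F : R) ^ Fintype.card ι else 0 := by
  simp only [dotProduct, map_sum_eq_prod]
  rw [← Fintype.prod_sum (fun i (c : F) => ψ (c * w i))]
  simp only [sum_mulShift _ hψ, Nat.cast_ite, Nat.cast_zero, Fintype.prod_ite_zero, prod_const,
    card_univ, funext_iff, Pi.zero_apply]

end AddChar

lemma sum_smul_dotProduct {R ι κ : Type*} [CommSemiring R] [Fintype ι] [Fintype κ]
    (s : κ → R) (x : κ → ι → R) (w : ι → R) :
    (∑ i, s i • x i) ⬝ᵥ w = s ⬝ᵥ fun i => x i ⬝ᵥ w := by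
  simp only [sum_dotProduct, smul_dotProduct, smul_eq_mul]
  rfl

lemma sum_sq_card_filter_eq_sum_sum_ite {α β : Type*} [Fintype β] [DecidableEq β]
    (B : Finset α) (f : α → β) :
    ∑ t, #{y ∈ B | f y = t} ^ 2 = ∑ y ∈ B, ∑ z ∈ B, if f y = f z then 1 else 0 := by
  simp only [card_eq_sum_ones, sum_filter, sq, sum_mul_sum]
  rw [sum_comm]
  refine sum_congr rfl fun y _ => ?_
  rw [sum_comm]
  refine sum_congr rfl fun z _ => ?_
  simp only [boole_mul, sum_ite_eq, mem_univ, if_true]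
  exact if_congr eq_comm rfl rfl

section Fourier

variable {F ι : Type*} [Field F] [Fintype ι] {ψ : AddChar F ℂ}

def fourierSum (ψ : AddChar F ℂ) (B : Finset (ι → F)) (u : ι → F) : ℂ := ∑ y ∈ B, ψ (u ⬝ᵥ y)

lemma normSq_fourierSum_zero (B : Finset (ι → F)) :
    Complex.normSq (fourierSum ψ B 0) = (#B : ℝ) ^ 2 := by
  simp [fourierSum, sq]

variable [Fintype F]

lemma normSq_fourierSum (B : Finset (ι → F)) (u : ι → F) :
    (Complex.normSq (fourierSum ψ B u) : ℂ) = ∑ y ∈ B, ∑ z ∈ B, ψ (u ⬝ᵥ (y - z)) := by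
  simp only [← Complex.mul_conj, fourierSum, map_sum, sum_mul_sum, sub_eq_add_neg, dotProduct_add,
    dotProduct_neg, AddChar.map_add_eq_mul, AddChar.map_neg_eq_conj]

variable [DecidableEq F]

lemma sum_normSq_fourierSum [DecidableEq ι] (hψ : ψ.IsPrimitive) (B : Finset (ι → F)) :
    ∑ u, Complex.normSq (fourierSum ψ B u) = (Fintype.card F : ℝ) ^ Fintype.card ι * #B := by
  suffices ∑ u, (Complex.normSq (fourierSum ψ B u) : ℂ) =
      (Fintype.card F : ℂ) ^ Fintype.card ι * #B by exact_mod_cast this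
  simp only [normSq_fourierSum]
  rw [sum_comm]
  simp only [sum_comm (s := univ), hψ.sum_apply_dotProduct, sub_eq_zero, sum_ite_eq]
  rw [sum_ite_mem, inter_self, sum_const, nsmul_eq_mul, mul_comm]

lemma sum_sq_card_filter_dotProduct_eq {κ : Type*} [Fintype κ] [DecidableEq κ]
    (hψ : ψ.IsPrimitive) (B : Finset (ι → F)) (x : κ → ι → F) :
    ∑ t : κ → F, (#{y ∈ B | ∀ i, x i ⬝ᵥ y = t i} : ℝ) ^ 2 =
      ((Fintype.card F : ℝ) ^ Fintype.card κ)⁻¹ *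
        ∑ s : κ → F, Complex.normSq (fourierSum ψ B (∑ i, s i • x i)) := by
  have hind : ∀ y z : ι → F, (if ∀ i, x i ⬝ᵥ y = x i ⬝ᵥ z then 1 else 0 : ℂ) =
      ((Fintype.card F : ℂ) ^ Fintype.card κ)⁻¹ *
        ∑ s : κ → F, ψ ((∑ i, s i • x i) ⬝ᵥ (y - z)) := by
    intro y z
    simp only [sum_smul_dotProduct]
    rw [hψ.sum_apply_dotProduct]
    simp only [funext_iff, Pi.zero_apply, dotProduct_sub, sub_eq_zero]
    split_ifs <;> simp
  have hpairs := sum_sq_card_filter_eq_sum_sum_ite B (fun y i => x i ⬝ᵥ y)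
  simp only [funext_iff] at hpairs
  apply Complex.ofReal_injective
  push_cast
  rw_mod_cast [hpairs]
  push_cast at hind ⊢
  simp only [hind, ← mul_sum, normSq_fourierSum]
  congr 1
  exact (sum_congr rfl fun _ _ => sum_comm).trans sum_comm

end Fourier

section Fibres

variable {K M κ : Type*} [DivisionRing K] [AddCommGroup M] [Module K M] [DecidableEq M]
  [Fintype κ] [DecidableEq κ]

lemma card_filter_piFinset_sum_smul_eq_le (A : κ → Finset M) {s : κ → K} {j : κ}
    (hj : s j ≠ 0) (u : M) :
    #{x ∈ Fintype.piFinset A | ∑ i, s i • x i = u} ≤ ∏ i ∈ univ.erase j, #(A i) := by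
  calc #{x ∈ Fintype.piFinset A | ∑ i, s i • x i = u}
      ≤ #(Fintype.piFinset (Function.update A j {0})) := by
        refine card_le_card_of_injOn (Function.update · j 0) (fun x hx => ?_)
          fun x hx x' hx' h => ?_
        · simp only [coe_filter, Set.mem_ofPred_eq, Fintype.mem_piFinset] at hx
          rw [mem_coe, Fintype.mem_piFinset]
          intro i
          rcases eq_or_ne i j with rfl | hi <;> simp_all
        · simp only [coe_filter, Set.mem_ofPred_eq] at hx hx'
          have hoff : ∀ i ≠ j, x i = x' i := fun i hi => by simpa [hi] using congrFun h i
          have hsj : s j • (x j - x' j) = 0 := by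
            rw [← Fintype.sum_eq_single (f := fun i => s i • (x i - x' i)) j
              fun i hi => by rw [hoff i hi, sub_self, smul_zero]]
            simp only [smul_sub, sum_sub_distrib, hx.2, hx'.2, sub_self]
          funext i
          rcases eq_or_ne i j with rfl | hi
          · exact sub_eq_zero.mp ((smul_eq_zero.mp hsj).resolve_left hj)
          · exact hoff i hi
    _ = ∏ i ∈ univ.erase j, #(A i) := by
        rw [Fintype.card_piFinset, ← mul_prod_erase univ _ (mem_univ j), Function.update_self,
          card_singleton, one_mul]
        exact prod_congr rfl fun i hi => by rw [Function.update_of_ne (ne_of_mem_erase hi)]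

end Fibres

lemma sum_comp_le_mul_sum_of_card_fiber_le {α β R : Type*} [Fintype β] [DecidableEq β]
    [CommSemiring R] [PartialOrder R] [IsOrderedRing R] {S : Finset α} {T : α → β} {g : β → R}
    (hg : ∀ u, 0 ≤ g u) {c : ℕ} (hc : ∀ u, #{x ∈ S | T x = u} ≤ c) :
    ∑ x ∈ S, g (T x) ≤ c * ∑ u, g u := by
  rw [← sum_fiberwise' S T g, mul_sum]
  refine sum_le_sum fun u _ => ?_
  rw [sum_const, nsmul_eq_mul]
  exact mul_le_mul_of_nonneg_right (Nat.mono_cast (hc u)) (hg u)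

lemma prod_erase_card_le_prod_mul_sum_one_div {κ α : Type*} [Fintype κ] [DecidableEq κ]
    (A : κ → Finset α) {j : κ} (hj : (A j).Nonempty) :
    ∏ i ∈ univ.erase j, (#(A i) : ℝ) ≤ (∏ i, (#(A i) : ℝ)) * ∑ i, 1 / (#(A i) : ℝ) := by
  have hAj : (#(A j) : ℝ) ≠ 0 := by positivity
  calc ∏ i ∈ univ.erase j, (#(A i) : ℝ) = (∏ i, (#(A i) : ℝ)) * (1 / #(A j)) := by
        rw [← mul_prod_erase univ _ (mem_univ j)]
        field_simp
    _ ≤ _ := by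
        gcongr
        exact single_le_sum (f := fun i => 1 / (#(A i) : ℝ)) (fun i _ => by positivity)
          (mem_univ j)

lemma sum_normSq_fourierSum_sum_smul_le {F ι κ : Type*} [Field F] [Fintype F] [DecidableEq F]
    [Fintype ι] [DecidableEq ι] [Fintype κ] [DecidableEq κ] {ψ : AddChar F ℂ}
    (hψ : ψ.IsPrimitive) (B : Finset (ι → F)) {A : κ → Finset (ι → F)}
    (hA : ∀ j, (A j).Nonempty) {s : κ → F} (hs : s ≠ 0) :
    ∑ x ∈ Fintype.piFinset A, Complex.normSq (fourierSum ψ B (∑ i, s i • x i)) ≤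
      (Fintype.card F : ℝ) ^ Fintype.card ι * #B * (∏ i, (#(A i) : ℝ)) *
        ∑ j, 1 / (#(A j) : ℝ) := by
  obtain ⟨j, hj⟩ := Function.ne_iff.mp hs
  calc ∑ x ∈ Fintype.piFinset A, Complex.normSq (fourierSum ψ B (∑ i, s i • x i))
      ≤ (∏ i ∈ univ.erase j, (#(A i) : ℝ)) * ((Fintype.card F : ℝ) ^ Fintype.card ι * #B) := by
        rw [← sum_normSq_fourierSum hψ B]
        exact_mod_cast sum_comp_le_mul_sum_of_card_fiber_le (fun _ => Complex.normSq_nonneg _)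
          (card_filter_piFinset_sum_smul_eq_le A hj)
    _ ≤ ((∏ i, (#(A i) : ℝ)) * ∑ i, 1 / (#(A i) : ℝ)) *
          ((Fintype.card F : ℝ) ^ Fintype.card ι * #B) := by
        gcongr
        exact prod_erase_card_le_prod_mul_sum_one_div A (hA j)
    _ = _ := by ring

theorem stmt5_general (F : Type) [Field F] [Fintype F] [DecidableEq F] (d ℓ : ℕ)
    (A : Fin ℓ → Finset (Fin d → F)) (hA : ∀ j, (A j).Nonempty)
    (B : Finset (Fin d → F)) :
    ∑ x ∈ Fintype.piFinset A, ∑ t : Fin ℓ → F,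
        (((B.filter fun y => ∀ i, dotp (x i) y = t i).card : ℝ)) ^ 2 ≤
      (B.card : ℝ) ^ 2 * (∏ i, ((A i).card : ℝ)) / (Fintype.card F : ℝ) ^ ℓ +
        (Fintype.card F : ℝ) ^ d * (B.card : ℝ) * (∏ i, ((A i).card : ℝ)) *
          ∑ j, 1 / ((A j).card : ℝ) := by
  obtain ⟨ψ, hψ⟩ : ∃ ψ : AddChar F ℂ, ψ.IsPrimitive :=
    ⟨_, AddChar.FiniteField.primitiveChar_to_Complex_isPrimitive F⟩
  set q : ℝ := (Fintype.card F : ℝ)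
  set E : ℝ := q ^ d * #B * (∏ i, (#(A i) : ℝ)) * ∑ j, 1 / (#(A j) : ℝ)
  set G : (Fin ℓ → F) → ℝ := fun s =>
    ∑ x ∈ Fintype.piFinset A, Complex.normSq (fourierSum ψ B (∑ i, s i • x i))
  have hG₀ : G 0 = #B ^ 2 * ∏ i, (#(A i) : ℝ) := by
    simp [G, normSq_fourierSum_zero, mul_comm]
  have hsum : ∑ s ∈ univ.erase 0, G s ≤ q ^ ℓ * E :=
    calc ∑ s ∈ univ.erase 0, G s ≤ ∑ s : Fin ℓ → F, E :=
          (sum_le_sum fun s hs => by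
            simpa [G, E, q] using sum_normSq_fourierSum_sum_smul_le hψ B hA (ne_of_mem_erase hs)).trans
            (sum_le_sum_of_subset_of_nonneg (erase_subset _ _) fun _ _ _ => by positivity)
      _ = q ^ ℓ * E := by simp [q]
  calc ∑ x ∈ Fintype.piFinset A, ∑ t : Fin ℓ → F,
        (((B.filter fun y => ∀ i, dotp (x i) y = t i).card : ℝ)) ^ 2
      = (q ^ ℓ)⁻¹ * ∑ s, G s := by
        conv_rhs => rw [sum_comm, mul_sum]
        refine sum_congr rfl fun x _ => ?_
        convert sum_sq_card_filter_dotProduct_eq hψ B x using 5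
        · -- `dotp` unfolds to `⬝ᵥ`; the two filters differ only in their decidability instances
          ext
          simp only [mem_filter]
          rfl
        · exact (Fintype.card_fin ℓ).symm
    _ = G 0 / q ^ ℓ + (q ^ ℓ)⁻¹ * ∑ s ∈ univ.erase 0, G s := by
        rw [← add_sum_erase _ _ (mem_univ 0), mul_add, div_eq_inv_mul]
    _ ≤ _ := by
        rw [hG₀]
        gcongr
        exact (inv_mul_le_iff₀ (by positivity)).mpr hsum

/-- For `A_1, …, A_ℓ, A ⊆ 𝔽_q^d` (each `A_j` nonempty),
`∑_{x ∈ A_1 × ⋯ × A_ℓ} ∑_{t ∈ 𝔽_q^ℓ} (Π^A_x(t))^2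
  ≤ |A|^2 ∏|A_i| / q^ℓ + q^d |A| (∏|A_i|) (∑_j 1/|A_j|)`. -/
theorem stmt5 (F : Type) [Field F] [Fintype F] [DecidableEq F] (d ℓ : ℕ)
    (hd : 1 ≤ d) (hℓ : 1 ≤ ℓ)
    (A : Fin ℓ → Finset (Fin d → F)) (hA : ∀ j, (A j).Nonempty)
    (B : Finset (Fin d → F)) :
    ∑ x ∈ Fintype.piFinset A, ∑ t : Fin ℓ → F,
        (((B.filter fun y => ∀ i, dotp (x i) y = t i).card : ℝ)) ^ 2 ≤
      (B.card : ℝ) ^ 2 * (∏ i, ((A i).card : ℝ)) / (Fintype.card F : ℝ) ^ ℓ +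
        (Fintype.card F : ℝ) ^ d * (B.card : ℝ) * (∏ i, ((A i).card : ℝ)) *
          ∑ j, 1 / ((A j).card : ℝ) :=
  stmt5_general F d ℓ A hA B
end

section
/- Let q be a prime power, d ≥ 1 an integer, χ a nontrivial additive character of 𝔽_q, A, B ⊆ 𝔽_q^d, and α ∈ 𝔽_q with α ≠ 0. Then |∑_{x ∈ B} S_{A,α}(x)| ≤ (|A||B|)^{1/2} · q^{(d+1)/2}, where S_{A,α}(x) = ∑_{s ∈ 𝔽_q^*} ∑_{y ∈ A} χ(s(x·y − α)). -/
open Finset ComplexConjugate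

lemma AddChar.map_sum_eq_prod_s10 {A M ι : Type*} [AddCommMonoid A] [CommMonoid M]
    (ψ : AddChar A M) (s : Finset ι) (f : ι → A) : ψ (∑ i ∈ s, f i) = ∏ i ∈ s, ψ (f i) :=
  map_sum ψ.toAddMonoidHom f s

lemma norm_sum_sq_le_card_mul_sum_norm_sq {ι E : Type*} [SeminormedAddCommGroup E]
    (s : Finset ι) (f : ι → E) : ‖∑ i ∈ s, f i‖ ^ 2 ≤ #s * ∑ i ∈ s, ‖f i‖ ^ 2 :=
  (pow_le_pow_left₀ (norm_nonneg _) (norm_sum_le s f) 2).trans sq_sum_le_card_mul_sum_sq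

lemma le_rpow_half_mul_rpow_half_of_sq_le {x a q : ℝ} (ha : 0 ≤ a) (hq : 0 ≤ q) (n : ℕ)
    (h : x ^ 2 ≤ a * q ^ n) : x ≤ a ^ ((1 : ℝ) / 2) * q ^ ((n : ℝ) / 2) := by
  have hsqrt : a ^ ((1 : ℝ) / 2) * q ^ ((n : ℝ) / 2) = √(a * q ^ n) := by
    rw [Real.sqrt_mul ha, Real.sqrt_eq_rpow, Real.sqrt_eq_rpow, ← Real.rpow_natCast,
      ← Real.rpow_mul hq, mul_one_div]
  rw [hsqrt]
  exact (le_abs_self x).trans (Real.abs_le_sqrt h)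

section FiniteField

variable {F : Type} [Field F] [Fintype F] [DecidableEq F]

lemma sum_univ_erase_zero_comp_mul_left {M : Type*} [AddCommGroup M] {a : F} (ha : a ≠ 0)
    (f : F → M) : ∑ s ∈ univ.erase 0, f (a * s) = ∑ s ∈ univ.erase 0, f s := by
  rw [sum_erase_eq_sub (mem_univ _), sum_erase_eq_sub (mem_univ _), mul_zero,
    Fintype.sum_bijective _ (mulLeft_bijective₀ a ha) _ f fun _ => rfl]

variable {χ : AddChar F ℂ}

lemma AddChar.sum_univ_erase_zero_mul_right (hχ : χ ≠ 1) (b : F) :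
    ∑ t ∈ univ.erase 0, χ (t * b) = (if b = 0 then (Fintype.card F : ℂ) else 0) - 1 := by
  rw [sum_erase_eq_sub (mem_univ _), AddChar.sum_mulShift b (.of_ne_one hχ), zero_mul,
    AddChar.map_zero_eq_one, Nat.cast_ite, Nat.cast_zero]

lemma AddChar.sum_dotProduct_eq_ite (hχ : χ ≠ 1) {d : ℕ} (v : Fin d → F) :
    ∑ x, χ (x ⬝ᵥ v) = if v = 0 then (Fintype.card F : ℂ) ^ d else 0 := by
  simp_rw [dotProduct, AddChar.map_sum_eq_prod_s10, ← Fintype.prod_sum (fun i t => χ (t * v i)),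
    AddChar.sum_mulShift _ (.of_ne_one hχ), Nat.cast_ite, Nat.cast_zero, prod_ite_zero,
    prod_const, card_univ, Fintype.card_fin]
  simp [funext_iff]

lemma AddChar.sum_norm_sq_sum_mul_dotProduct (hχ : χ ≠ 1) {d : ℕ} {ι : Type*} (I : Finset ι)
    (v : ι → Fin d → F) (c : ι → ℂ) :
    ((∑ x, ‖∑ i ∈ I, c i * χ (x ⬝ᵥ v i)‖ ^ 2 : ℝ) : ℂ) =
      (Fintype.card F : ℂ) ^ d *
        ∑ i ∈ I, ∑ j ∈ I, if v i = v j then c i * conj (c j) else 0 := by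
  calc ((∑ x, ‖∑ i ∈ I, c i * χ (x ⬝ᵥ v i)‖ ^ 2 : ℝ) : ℂ)
      = ∑ x, ∑ i ∈ I, ∑ j ∈ I, c i * conj (c j) * χ (x ⬝ᵥ (v i - v j)) := by
        rw [Complex.ofReal_sum]
        refine sum_congr rfl fun x _ => ?_
        rw [← Complex.normSq_eq_norm_sq, ← Complex.mul_conj, map_sum, sum_mul_sum]
        refine sum_congr rfl fun i _ => sum_congr rfl fun j _ => ?_
        rw [map_mul, ← AddChar.map_neg_eq_conj, dotProduct_sub, sub_eq_add_neg,
          AddChar.map_add_eq_mul]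
        ring
    _ = ∑ i ∈ I, ∑ j ∈ I, c i * conj (c j) * ∑ x, χ (x ⬝ᵥ (v i - v j)) := by
        rw [sum_comm]
        simp_rw [mul_sum]
        exact sum_congr rfl fun i _ => sum_comm
    _ = _ := by
        rw [mul_sum]
        refine sum_congr rfl fun i _ => ?_
        rw [mul_sum]
        refine sum_congr rfl fun j _ => ?_
        rw [AddChar.sum_dotProduct_eq_ite hχ]
        simp only [sub_eq_zero]
        split_ifs <;> ring

variable (χ) in
/-- `S_{A,α}(x)`. -/
def dotCharSum (α : F) {d : ℕ} (A : Finset (Fin d → F)) (x : Fin d → F) : ℂ :=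
  ∑ s ∈ univ.erase 0, ∑ y ∈ A, χ (s * (dotp x y - α))

variable (χ) in
def collisionSum (α : F) {d : ℕ} (A : Finset (Fin d → F)) (y : Fin d → F) : ℂ :=
  ∑ s ∈ univ.erase 0, ∑ s' ∈ univ.erase 0, ∑ y' ∈ A,
    if s • y = s' • y' then χ ((s' - s) * α) else 0

lemma dotCharSum_eq_sum_product (α : F) {d : ℕ} (A : Finset (Fin d → F)) (x : Fin d → F) :
    dotCharSum χ α A x = ∑ p ∈ univ.erase 0 ×ˢ A, χ (-(p.1 * α)) * χ (x ⬝ᵥ p.1 • p.2) := by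
  rw [dotCharSum, sum_product]
  refine sum_congr rfl fun s _ => sum_congr rfl fun y _ => ?_
  rw [← AddChar.map_add_eq_mul, dotProduct_smul, smul_eq_mul, dotp]
  congr 1
  simp only [dotProduct]
  ring

lemma sum_norm_sq_dotCharSum (hχ : χ ≠ 1) (α : F) {d : ℕ} (A : Finset (Fin d → F)) :
    ((∑ x, ‖dotCharSum χ α A x‖ ^ 2 : ℝ) : ℂ) =
      (Fintype.card F : ℂ) ^ d * ∑ y ∈ A, collisionSum χ α A y := by
  simp_rw [dotCharSum_eq_sum_product]
  rw [AddChar.sum_norm_sq_sum_mul_dotProduct hχ, sum_product, sum_comm]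
  congr 1
  refine sum_congr rfl fun y _ => sum_congr rfl fun s _ => ?_
  rw [sum_product]
  refine sum_congr rfl fun s' _ => sum_congr rfl fun y' _ => ?_
  rw [← AddChar.map_neg_eq_conj, neg_neg, ← AddChar.map_add_eq_mul]
  congr 2
  ring

lemma sum_sum_ite_smul_eq_sum_filter {d : ℕ} (α : F) (A : Finset (Fin d → F)) (y : Fin d → F)
    {s' : F} (hs' : s' ≠ 0) :
    ∑ s ∈ univ.erase 0, ∑ y' ∈ A, (if s • y = s' • y' then χ ((s' - s) * α) else 0) =
      ∑ t ∈ univ.erase 0 with t • y ∈ A, χ (s' * ((1 - t) * α)) := by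
  have hcollapse (s : F) : ∑ y' ∈ A, (if s • y = s' • y' then χ ((s' - s) * α) else 0) =
      if (s'⁻¹ * s) • y ∈ A then χ ((s' - s) * α) else 0 := by
    have hiff (y' : Fin d → F) : s • y = s' • y' ↔ (s'⁻¹ * s) • y = y' := by
      rw [mul_smul, inv_smul_eq_iff₀ hs', eq_comm]
    simp_rw [hiff]
    exact sum_ite_eq A _ _
  rw [sum_congr rfl fun s _ => hcollapse s, sum_filter, ← sum_univ_erase_zero_comp_mul_left hs']
  refine sum_congr rfl fun t _ => ?_
  rw [inv_mul_cancel_left₀ hs']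
  congr 2
  ring

lemma collisionSum_eq (hχ : χ ≠ 1) {α : F} (hα : α ≠ 0) {d : ℕ} {A : Finset (Fin d → F)}
    {y : Fin d → F} (hy : y ∈ A) :
    collisionSum χ α A y = Fintype.card F - #{t ∈ univ.erase (0 : F) | t • y ∈ A} := by
  have h1 : (1 : F) ∈ {t ∈ univ.erase (0 : F) | t • y ∈ A} := by simp [hy]
  rw [collisionSum, sum_comm, sum_congr rfl fun s' hs' =>
    sum_sum_ite_smul_eq_sum_filter α A y (ne_of_mem_erase hs'), sum_comm]
  simp_rw [AddChar.sum_univ_erase_zero_mul_right hχ, mul_eq_zero, hα, or_false, sub_eq_zero,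
    eq_comm (a := (1 : F)), sum_sub_distrib, sum_ite_eq' _ _ _, if_pos h1, sum_const, nsmul_one]

lemma norm_collisionSum_le (hχ : χ ≠ 1) {α : F} (hα : α ≠ 0) {d : ℕ} {A : Finset (Fin d → F)}
    {y : Fin d → F} (hy : y ∈ A) : ‖collisionSum χ α A y‖ ≤ Fintype.card F := by
  have hcard : #{t ∈ univ.erase (0 : F) | t • y ∈ A} ≤ Fintype.card F :=
    (card_filter_le _ _).trans (card_le_univ _)
  rw [collisionSum_eq hχ hα hy, ← Nat.cast_sub hcard, Complex.norm_natCast]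
  exact_mod_cast Nat.sub_le _ _

lemma sum_norm_sq_dotCharSum_le (hχ : χ ≠ 1) {α : F} (hα : α ≠ 0) {d : ℕ}
    (A : Finset (Fin d → F)) :
    ∑ x, ‖dotCharSum χ α A x‖ ^ 2 ≤ #A * (Fintype.card F : ℝ) ^ (d + 1) := by
  have hE : ‖∑ y ∈ A, collisionSum χ α A y‖ ≤ #A * (Fintype.card F : ℝ) := by
    simpa using norm_sum_le_of_le A fun y hy => norm_collisionSum_le hχ hα hy
  calc ∑ x, ‖dotCharSum χ α A x‖ ^ 2
      = ‖((∑ x, ‖dotCharSum χ α A x‖ ^ 2 : ℝ) : ℂ)‖ := by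
        rw [Complex.norm_real, Real.norm_of_nonneg (by positivity)]
    _ = (Fintype.card F : ℝ) ^ d * ‖∑ y ∈ A, collisionSum χ α A y‖ := by
        rw [sum_norm_sq_dotCharSum hχ, norm_mul, norm_pow, Complex.norm_natCast]
    _ ≤ (Fintype.card F : ℝ) ^ d * (#A * Fintype.card F) := by gcongr
    _ = _ := by ring

end FiniteField

theorem stmt10_general (F : Type) [Field F] [Fintype F] [DecidableEq F] (d : ℕ)
    (χ : AddChar F ℂ) (hχ : χ ≠ 1) (A B : Finset (Fin d → F)) (α : F) (hα : α ≠ 0) :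
    ‖∑ x ∈ B, ∑ s ∈ Finset.univ.erase (0 : F), ∑ y ∈ A,
        χ (s * (dotp x y - α))‖ ≤
      ((A.card : ℝ) * (B.card : ℝ)) ^ ((1 : ℝ) / 2) *
        (Fintype.card F : ℝ) ^ (((d : ℝ) + 1) / 2) := by
  have hB : ∑ x ∈ B, ‖dotCharSum χ α A x‖ ^ 2 ≤ ∑ x, ‖dotCharSum χ α A x‖ ^ 2 :=
    sum_le_univ_sum_of_nonneg fun _ => by positivity
  have hsq : ‖∑ x ∈ B, dotCharSum χ α A x‖ ^ 2 ≤
      (#A * #B : ℝ) * (Fintype.card F : ℝ) ^ (d + 1) := by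
    calc _ ≤ #B * ∑ x ∈ B, ‖dotCharSum χ α A x‖ ^ 2 := norm_sum_sq_le_card_mul_sum_norm_sq _ _
      _ ≤ #B * (#A * (Fintype.card F : ℝ) ^ (d + 1)) := by
        gcongr
        exact hB.trans (sum_norm_sq_dotCharSum_le hχ hα A)
      _ = _ := by ring
  exact_mod_cast le_rpow_half_mul_rpow_half_of_sq_le (by positivity) (by positivity) (d + 1) hsq

/-- For `A, B ⊆ 𝔽_q^d` and `α ≠ 0`,
`|∑_{x ∈ B} S_{A,α}(x)| ≤ (|A||B|)^{1/2} q^{(d+1)/2}`, where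
`S_{A,α}(x) = ∑_{s ∈ 𝔽_q^*} ∑_{y ∈ A} χ(s(x·y − α))`. -/
theorem stmt10 (F : Type) [Field F] [Fintype F] [DecidableEq F] (d : ℕ) (hd : 1 ≤ d)
    (χ : AddChar F ℂ) (hχ : χ ≠ 1) (A B : Finset (Fin d → F)) (α : F) (hα : α ≠ 0) :
    ‖∑ x ∈ B, ∑ s ∈ Finset.univ.erase (0 : F), ∑ y ∈ A,
        χ (s * (dotp x y - α))‖ ≤
      ((A.card : ℝ) * (B.card : ℝ)) ^ ((1 : ℝ) / 2) *
        (Fintype.card F : ℝ) ^ (((d : ℝ) + 1) / 2) :=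
  stmt10_general F d χ hχ A B α hα
end

section
/- Let q be a prime power, d ≥ 1 an integer, χ a nontrivial additive character of 𝔽_q, A ⊆ 𝔽_q^d, and α ∈ 𝔽_q with α ≠ 0. Then |∑_{s, s' ∈ 𝔽_q^*} ∑_{y, y' ∈ A, s y = s' y'} χ(α(s' − s))| ≤ |A|·q, where the inner sum is over all pairs (y, y') ∈ A × A with s y = s' y' in 𝔽_q^d. -/
/-!
Substituting `s = s' * l`, the condition `s • y = s' • y'` becomes `l • y = y'`, so the sum is
`∑_{l ≠ 0} N(l) ∑_{s' ≠ 0} χ(α (1 - l) s')` with `N(l) = #{y ∈ A | l • y ∈ A}`. The inner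
character sum is `q - 1` for `l = 1` and `-1` otherwise, so the whole sum equals the integer
`q |A| - ∑_{l ≠ 0} N(l)`, which lies between `0` and `q |A|`.
-/

open Finset AddChar

theorem sum_erase_zero_addChar_mul {F R : Type*} [Field F] [Fintype F] [DecidableEq F]
    [CommRing R] [IsDomain R] {ψ : AddChar F R} (hψ : ψ ≠ 1) (b : F) :
    ∑ x ∈ univ.erase 0, ψ (x * b) = (if b = 0 then (Fintype.card F : R) else 0) - 1 := by
  rw [sum_erase_eq_sub (mem_univ 0), sum_mulShift b (IsPrimitive.of_ne_one hψ), zero_mul,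
    map_zero_eq_one, Nat.cast_ite, Nat.cast_zero]

section Dilation

variable {G V M : Type*} [DecidableEq V]

def dilationCount [SMul G V] (A : Finset V) (l : G) : ℕ := #{y ∈ A | l • y ∈ A}

theorem dilationCount_one [Monoid G] [MulAction G V] (A : Finset V) :
    dilationCount A (1 : G) = #A := by
  simp [dilationCount]

theorem dilationCount_le [SMul G V] (A : Finset V) (l : G) : dilationCount A l ≤ #A :=
  card_filter_le _ _

theorem sum_dilationCount_erase_zero_le [Zero G] [Fintype G] [DecidableEq G] [SMul G V]
    (A : Finset V) :
    ∑ l ∈ univ.erase (0 : G), dilationCount A l ≤ Fintype.card G * #A :=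
  calc ∑ l ∈ univ.erase (0 : G), dilationCount A l ≤ #(univ.erase (0 : G)) * #A :=
        sum_le_card_nsmul _ _ _ fun l _ => dilationCount_le A l
    _ ≤ Fintype.card G * #A := Nat.mul_le_mul_right _ (card_le_univ _)

variable [GroupWithZero G] [MulAction G V] [AddCommMonoid M]

theorem sum_sum_ite_smul_eq_smul (A : Finset V) (m : M) {s' : G} (hs' : s' ≠ 0) (l : G) :
    ∑ y ∈ A, ∑ y' ∈ A, (if (s' * l) • y = s' • y' then m else 0) = dilationCount A l • m := by
  have hiff : ∀ y y' : V, (s' * l) • y = s' • y' ↔ l • y = y' := fun y y' => by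
    rw [mul_smul]
    exact (MulAction.injective₀ hs').eq_iff
  simp_rw [hiff, sum_ite_eq, ← sum_filter, sum_const, dilationCount]

theorem sum_sum_ite_smul_eq_smul_eq_sum_dilationCount [Fintype G] [DecidableEq G]
    (A : Finset V) (f : G → G → M) :
    ∑ s ∈ univ.erase 0, ∑ s' ∈ univ.erase 0, ∑ y ∈ A, ∑ y' ∈ A,
        (if s • y = s' • y' then f s s' else 0) =
      ∑ l ∈ univ.erase 0, dilationCount A l • ∑ s' ∈ univ.erase 0, f (s' * l) s' := by
  simp_rw [smul_sum]
  rw [sum_comm, eq_comm, sum_comm]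
  refine sum_congr rfl fun s' hs' => ?_
  have hs'0 : s' ≠ 0 := ne_of_mem_erase hs'
  refine sum_equiv (Equiv.mulLeft₀ s' hs'0) (fun l => by simp [hs'0]) fun l _ => ?_
  exact (sum_sum_ite_smul_eq_smul A (f (s' * l) s') hs'0 l).symm

theorem sum_dilationCount_smul_ite_sub_one {R : Type*} [Ring R] [Fintype G] [DecidableEq G]
    (A : Finset V) :
    ∑ l ∈ univ.erase (0 : G),
        dilationCount A l • ((if l = 1 then (Fintype.card G : R) else 0) - 1) =
      ((Fintype.card G * #A - ∑ l ∈ univ.erase (0 : G), dilationCount A l : ℕ) : R) := by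
  rw [Nat.cast_sub (sum_dilationCount_erase_zero_le A), Nat.cast_mul, Nat.cast_sum]
  simp only [smul_sub, smul_ite, smul_zero, nsmul_one, sum_sub_distrib]
  rw [sum_ite_eq' _ _ _, if_pos (by simp), dilationCount_one, nsmul_eq_mul, Nat.cast_comm]

end Dilation

theorem stmt12_general (F : Type) [Field F] [Fintype F] [DecidableEq F] (d : ℕ)
    (χ : AddChar F ℂ) (hχ : χ ≠ 1) (A : Finset (Fin d → F)) (α : F) (hα : α ≠ 0) :
    ‖(∑ s ∈ Finset.univ.erase (0 : F), ∑ s' ∈ Finset.univ.erase (0 : F),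
        ∑ y ∈ A, ∑ y' ∈ A,
          if s • y = s' • y' then χ (α * (s' - s)) else 0)‖ ≤
      (A.card : ℝ) * (Fintype.card F : ℝ) := by
  have hchar : ∀ l : F, ∑ s' ∈ univ.erase 0, χ (α * (s' - s' * l)) =
      (if l = 1 then (Fintype.card F : ℂ) else 0) - 1 := fun l => by
    have hb : α * (1 - l) = 0 ↔ l = 1 := by
      rw [mul_eq_zero, or_iff_right hα, sub_eq_zero, eq_comm]
    simp_rw [show ∀ s' : F, α * (s' - s' * l) = s' * (α * (1 - l)) from fun s' => by ring]
    rw [sum_erase_zero_addChar_mul hχ, if_congr hb rfl rfl]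
  rw [sum_sum_ite_smul_eq_smul_eq_sum_dilationCount A (fun s s' => χ (α * (s' - s)))]
  simp only [hchar]
  rw [sum_dilationCount_smul_ite_sub_one, Complex.norm_natCast, mul_comm]
  exact_mod_cast Nat.sub_le _ _

/-- For `A ⊆ 𝔽_q^d` and `α ≠ 0`,
`|∑_{s,s' ∈ 𝔽_q^*} ∑_{y,y' ∈ A, sy = s'y'} χ(α(s' − s))| ≤ |A| q`. -/
theorem stmt12 (F : Type) [Field F] [Fintype F] [DecidableEq F] (d : ℕ) (hd : 1 ≤ d)
    (χ : AddChar F ℂ) (hχ : χ ≠ 1) (A : Finset (Fin d → F)) (α : F) (hα : α ≠ 0) :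
    ‖(∑ s ∈ Finset.univ.erase (0 : F), ∑ s' ∈ Finset.univ.erase (0 : F),
        ∑ y ∈ A, ∑ y' ∈ A,
          if s • y = s' • y' then χ (α * (s' - s)) else 0)‖ ≤
      (A.card : ℝ) * (Fintype.card F : ℝ) :=
  stmt12_general F d χ hχ A α hα
end

section
/- Let q be a prime power and d ≥ 1 an integer. Let A_1, A_2, A_3 ⊆ 𝔽_q^d satisfy |A_1||A_2| ≥ 100·q^{d+1} and |A_2||A_3| ≥ 100·q^{d+1}. Then for all α_1, α_2 ∈ 𝔽_q^*, the number of triples (x_1, x_2, x_3) ∈ A_1 × A_2 × A_3 with x_1·x_2 = α_1 and x_2·x_3 = α_2 is at least (1/4)·q^{-2}·|A_1||A_2||A_3|; in particular there exist x_1 ∈ A_1, x_2 ∈ A_2, x_3 ∈ A_3 with x_1·x_2 = α_1 and x_2·x_3 = α_2. -/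
/-!
For `x ∈ 𝔽_q^d` let `N_A(x)` be the number of `a ∈ A` with `a · x = α`; the triples are counted by
`∑_{x ∈ A₂} N_{A₁}(x) N_{A₃}(x)`, and as `α ≠ 0`, removing `0` from `A` does not change `N_A`.
A hyperplane `a · x = α` has `q^{d-1}` points and two non-parallel ones meet in `q^{d-2}` points, so
for `0 ∉ A` the first two moments of `N_A` over `𝔽_q^d` give `∑_x (N_A(x) - |A|/q)² ≤ |A| q^{d-1}`.
By Chebyshev, for each of `A₁`, `A₃` at most `|A₂|/15` points of `A₂` have `N_A(x) < (3/5)|A|/q`,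
so on at least `13/15` of `A₂` the summand is at least `(9/25)|A₁||A₃|/q²` (up to the loss from
removing `0`).
-/

open Finset Matrix

theorem AddMonoidHom.card_fiber_mul_card_of_surjective {G H : Type*} [AddGroup G] [Fintype G]
    [AddGroup H] [Fintype H] [DecidableEq H] (f : G →+ H) (hf : Function.Surjective f) (y : H) :
    #{g | f g = y} * Fintype.card H = Fintype.card G := by
  rw [← card_univ (α := G), card_eq_sum_card_fiberwise (f := f) (s := univ) (t := univ) (by simp),
    sum_congr rfl fun z _ => AddMonoidHom.card_fiber_eq_of_mem_range f (hf z) (hf y),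
    sum_const, smul_eq_mul, card_univ, mul_comm]

section LinearEquations

variable {F m n : Type*} [Field F] [Fintype m] [Fintype n]

theorem Matrix.mulVec_surjective_of_linearIndependent_row {M : Matrix m n F}
    (hM : LinearIndependent F M.row) : Function.Surjective M.mulVec := by
  have : LinearMap.range M.mulVecLin = ⊤ := by
    apply Submodule.eq_top_of_finrank_eq
    rw [← Matrix.rank, hM.rank_matrix, Module.finrank_fintype_fun_eq_card]
  exact LinearMap.range_eq_top.mp this

variable [Fintype F] [DecidableEq F] [DecidableEq m] [DecidableEq n]

theorem Matrix.card_mulVec_eq_mul {M : Matrix m n F} (hM : LinearIndependent F M.row)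
    (y : m → F) :
    #{x | M *ᵥ x = y} * Fintype.card F ^ Fintype.card m = Fintype.card F ^ Fintype.card n := by
  have := M.mulVecLin.toAddMonoidHom.card_fiber_mul_card_of_surjective
    (mulVec_surjective_of_linearIndependent_row hM) y
  simp only [Fintype.card_fun] at this
  exact this

theorem card_dotProduct_eq_mul {a : n → F} (ha : a ≠ 0) (α : F) :
    #{x | a ⬝ᵥ x = α} * Fintype.card F = Fintype.card F ^ Fintype.card n := by
  have hM : LinearIndependent F (Matrix.of ![a]).row := linearIndependent_unique_iff.mpr ha
  simpa [funext_iff, mulVec] using Matrix.card_mulVec_eq_mul hM ![α]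

theorem card_dotProduct_eq_and_eq_mul {a b : n → F} (hab : LinearIndependent F ![a, b])
    (α β : F) :
    #{x | a ⬝ᵥ x = α ∧ b ⬝ᵥ x = β} * Fintype.card F ^ 2 = Fintype.card F ^ Fintype.card n := by
  simpa [funext_iff, mulVec, Fin.forall_fin_two] using
    Matrix.card_mulVec_eq_mul (M := Matrix.of ![a, b]) hab ![α, β]

end LinearEquations

theorem Finset.card_filter_lt_mul_sq_le_sum_sq {ι : Type*} (s : Finset ι) (f : ι → ℝ)
    {c μ : ℝ} (hcμ : c ≤ μ) : #{x ∈ s | f x < c} * (μ - c) ^ 2 ≤ ∑ x ∈ s, (f x - μ) ^ 2 := by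
  calc #{x ∈ s | f x < c} * (μ - c) ^ 2 ≤ ∑ x ∈ s with f x < c, (f x - μ) ^ 2 := by
        rw [← nsmul_eq_mul]
        refine card_nsmul_le_sum _ _ _ fun x hx => ?_
        have hx := (mem_filter.mp hx).2
        nlinarith
    _ ≤ ∑ x ∈ s, (f x - μ) ^ 2 :=
        sum_le_sum_of_subset_of_nonneg (filter_subset _ _) fun _ _ _ => sq_nonneg _

theorem Finset.card_filter_mul_le_sum_mul {ι : Type*} (s : Finset ι) {f g : ι → ℝ}
    (hf : ∀ x ∈ s, 0 ≤ f x) (hg : ∀ x ∈ s, 0 ≤ g x) {a b : ℝ} (ha : 0 ≤ a) (hb : 0 ≤ b) :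
    #{x ∈ s | a ≤ f x ∧ b ≤ g x} * (a * b) ≤ ∑ x ∈ s, f x * g x := by
  calc #{x ∈ s | a ≤ f x ∧ b ≤ g x} * (a * b)
      ≤ ∑ x ∈ s with a ≤ f x ∧ b ≤ g x, f x * g x := by
        rw [← nsmul_eq_mul]
        refine card_nsmul_le_sum _ _ _ fun x hx => ?_
        obtain ⟨-, hfx, hgx⟩ := mem_filter.mp hx
        exact mul_le_mul hfx hgx hb (ha.trans hfx)
    _ ≤ ∑ x ∈ s, f x * g x := sum_le_sum_of_subset_of_nonneg (filter_subset _ _)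
        fun x hx _ => mul_nonneg (hf x hx) (hg x hx)

theorem Finset.card_le_card_filter_and_add {ι : Type*} (s : Finset ι) (p r : ι → Prop)
    [DecidablePred p] [DecidablePred r] :
    #s ≤ #{x ∈ s | p x ∧ r x} + #{x ∈ s | ¬p x} + #{x ∈ s | ¬r x} := by
  classical
  calc #s ≤ #({x ∈ s | p x ∧ r x} ∪ {x ∈ s | ¬p x} ∪ {x ∈ s | ¬r x}) :=
        card_le_card fun x hx => by by_cases p x <;> by_cases r x <;> simp_all
    _ ≤ _ := (card_union_le _ _).trans (Nat.add_le_add_right (card_union_le _ _) _)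

theorem Finset.card_sub_one_le_card_erase {α : Type*} [DecidableEq α] (s : Finset α) (a : α) :
    (#s : ℝ) - 1 ≤ #(s.erase a) := by
  have h : #s ≤ #(s.erase a) + 1 := by
    have := pred_card_le_card_erase (s := s) (a := a)
    omega
  have h' : (#s : ℝ) ≤ #(s.erase a) + 1 := by exact_mod_cast h
  linarith

theorem mul_le_card_of_mul_pow_succ_le {F n : Type*} [Fintype F] [Nonempty F] [Fintype n]
    [DecidableEq n] {A S : Finset (n → F)} {c : ℝ}
    (h : c * Fintype.card F ^ (Fintype.card n + 1) ≤ #A * #S) : c * Fintype.card F ≤ #A := by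
  have hS : (#S : ℝ) ≤ Fintype.card F ^ Fintype.card n := by
    exact_mod_cast (Fintype.card_fun (α := n) (β := F)) ▸ card_le_univ S
  refine le_of_mul_le_mul_right ?_ (by positivity : (0 : ℝ) < Fintype.card F ^ Fintype.card n)
  calc c * Fintype.card F * Fintype.card F ^ Fintype.card n
        = c * Fintype.card F ^ (Fintype.card n + 1) := by ring
    _ ≤ #A * #S := h
    _ ≤ #A * Fintype.card F ^ Fintype.card n := by gcongr

section DotCount

variable {F n : Type*} [Field F] [DecidableEq F] [Fintype n]

def dotCount (A : Finset (n → F)) (α : F) (x : n → F) : ℕ := #{a ∈ A | a ⬝ᵥ x = α}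

variable {A : Finset (n → F)} {α : F}

theorem dotCount_erase_zero (hα : α ≠ 0) (x : n → F) :
    dotCount (A.erase 0) α x = dotCount A α x := by
  simp only [dotCount, filter_erase]
  rw [erase_eq_of_notMem]
  simp [hα.symm]

theorem card_filter_dotProduct_eq_and_eq (A₁ A₂ A₃ : Finset (n → F)) (α₁ α₂ : F) :
    #{p ∈ A₁ ×ˢ A₂ ×ˢ A₃ | p.1 ⬝ᵥ p.2.1 = α₁ ∧ p.2.1 ⬝ᵥ p.2.2 = α₂}
      = ∑ x ∈ A₂, dotCount A₁ α₁ x * dotCount A₃ α₂ x := by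
  simp only [card_filter, sum_product, dotCount, sum_mul_sum, ite_zero_mul_ite_zero, mul_one,
    ite_and]
  rw [sum_comm]
  refine sum_congr rfl fun x _ => sum_congr rfl fun a _ => sum_congr rfl fun b _ => ?_
  rw [dotProduct_comm b]

variable [Fintype F] [DecidableEq n]

local notation "q" => Fintype.card F

theorem card_dotProduct_eq_and_eq_mul_le {a b : n → F} (ha : a ≠ 0) (hα : α ≠ 0) :
    #{x | a ⬝ᵥ x = α ∧ b ⬝ᵥ x = α} * q ^ 2
      ≤ q ^ Fintype.card n + if a = b then q ^ Fintype.card n * q else 0 := by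
  by_cases hab : LinearIndependent F ![a, b]
  · rw [card_dotProduct_eq_and_eq_mul hab]
    exact Nat.le_add_right _ _
  obtain ⟨c, rfl⟩ : ∃ c : F, c • a = b := by simpa [LinearIndependent.pair_iff' ha] using hab
  rcases eq_or_ne c 1 with rfl | hc
  · simp [sq, ← mul_assoc, card_dotProduct_eq_mul ha]
  · -- distinct parallel hyperplanes, as `α ≠ 0`
    have : #{x | a ⬝ᵥ x = α ∧ (c • a) ⬝ᵥ x = α} = 0 := by
      rw [card_eq_zero, filter_eq_empty_iff]
      rintro x - ⟨h₁, h₂⟩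
      rw [smul_dotProduct, h₁, smul_eq_mul] at h₂
      exact hc (mul_right_cancel₀ hα (h₂.trans (one_mul α).symm))
    rw [this, zero_mul]
    exact Nat.zero_le _

theorem sum_dotCount (A : Finset (n → F)) (α : F) :
    ∑ x, dotCount A α x = ∑ a ∈ A, #{x | a ⬝ᵥ x = α} := by
  simp only [dotCount, card_filter]
  exact sum_comm

theorem sum_dotCount_sq (A : Finset (n → F)) (α : F) :
    ∑ x, dotCount A α x ^ 2 = ∑ a ∈ A, ∑ b ∈ A, #{x | a ⬝ᵥ x = α ∧ b ⬝ᵥ x = α} := by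
  simp only [dotCount, card_filter, sq, sum_mul_sum, ite_zero_mul_ite_zero, mul_one]
  rw [sum_comm]
  exact sum_congr rfl fun _ _ => sum_comm

theorem sum_dotCount_mul (h0 : 0 ∉ A) (α : F) :
    (∑ x, dotCount A α x) * q = #A * q ^ Fintype.card n := by
  rw [sum_dotCount, sum_mul,
    sum_congr rfl fun a ha => card_dotProduct_eq_mul (ne_of_mem_of_not_mem ha h0) α,
    sum_const, smul_eq_mul]

theorem sum_dotCount_sq_mul_le (h0 : 0 ∉ A) (hα : α ≠ 0) :
    (∑ x, dotCount A α x ^ 2) * q ^ 2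
      ≤ #A * q ^ Fintype.card n * q + #A ^ 2 * q ^ Fintype.card n := by
  calc (∑ x, dotCount A α x ^ 2) * q ^ 2
      ≤ ∑ a ∈ A, ∑ b ∈ A, (q ^ Fintype.card n + if a = b then q ^ Fintype.card n * q else 0) := by
        rw [sum_dotCount_sq, sum_mul]
        refine sum_le_sum fun a ha => ?_
        rw [sum_mul]
        exact sum_le_sum fun b _ =>
          card_dotProduct_eq_and_eq_mul_le (ne_of_mem_of_not_mem ha h0) hα
    _ = #A * q ^ Fintype.card n * q + #A ^ 2 * q ^ Fintype.card n := by
        simp only [sum_add_distrib, sum_const, sum_ite_eq, smul_eq_mul]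
        rw [sum_ite_mem, inter_self, sum_const, smul_eq_mul]
        ring

theorem sum_sq_dotCount_mul_sub_le (h0 : 0 ∉ A) (hα : α ≠ 0) :
    ∑ x, ((dotCount A α x : ℝ) * q - #A) ^ 2 ≤ #A * q ^ Fintype.card n * q := by
  have h₁ : (∑ x, (dotCount A α x : ℝ)) * q = #A * q ^ Fintype.card n := by
    exact_mod_cast sum_dotCount_mul h0 α
  have h₂ : (∑ x, (dotCount A α x : ℝ) ^ 2) * q ^ 2
      ≤ #A * q ^ Fintype.card n * q + #A ^ 2 * q ^ Fintype.card n := by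
    exact_mod_cast sum_dotCount_sq_mul_le h0 hα
  have hexpand : ∑ x, ((dotCount A α x : ℝ) * q - #A) ^ 2
      = (∑ x, (dotCount A α x : ℝ) ^ 2) * q ^ 2 - 2 * #A * ((∑ x, (dotCount A α x : ℝ)) * q)
        + q ^ Fintype.card n * #A ^ 2 := by
    rw [sum_mul, sum_mul, mul_sum, ← sum_sub_distrib]
    calc _ = ∑ x, ((dotCount A α x : ℝ) ^ 2 * q ^ 2 - 2 * #A * (dotCount A α x * q) + #A ^ 2) :=
          sum_congr rfl fun _ _ => by ring
      _ = _ := by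
          rw [sum_add_distrib, sum_const, card_univ, Fintype.card_fun, nsmul_eq_mul]
          push_cast
          ring
  rw [hexpand, h₁]
  linarith

theorem mul_card_le_card_erase_zero {S : Finset (n → F)}
    (hAS : 100 * (q : ℝ) ^ (Fintype.card n + 1) ≤ #A * #S) :
    99 / 100 * (#A : ℝ) ≤ #(A.erase 0) := by
  have hA : 100 * (q : ℝ) ≤ #A := mul_le_card_of_mul_pow_succ_le hAS
  have hq : (1 : ℝ) ≤ q := by exact_mod_cast Fintype.card_pos
  linarith [card_sub_one_le_card_erase A 0]

theorem card_filter_dotCount_mul_lt_le (S : Finset (n → F)) (hα : α ≠ 0)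
    (hAS : 100 * (q : ℝ) ^ (Fintype.card n + 1) ≤ #A * #S) :
    (#{x ∈ S | (dotCount A α x : ℝ) * q < 3 / 5 * #(A.erase 0)} : ℝ) ≤ #S / 15 := by
  set m : ℝ := (#(A.erase 0) : ℝ)
  set b : ℝ := (#{x ∈ S | (dotCount A α x : ℝ) * q < 3 / 5 * m} : ℝ)
  have hm : 99 / 100 * (#A : ℝ) ≤ m := mul_card_le_card_erase_zero hAS
  have hm₀ : 0 < m := by
    have : (0 : ℝ) < 100 * (q : ℝ) ^ (Fintype.card n + 1) := by positivity
    nlinarith [(Nat.cast_nonneg _ : (0 : ℝ) ≤ #S)]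
  have hchebyshev : b * (m - 3 / 5 * m) ^ 2 ≤ m * (q ^ Fintype.card n * q) := by
    refine (card_filter_lt_mul_sq_le_sum_sq S (fun x => (dotCount A α x : ℝ) * q)
      (by linarith)).trans ?_
    refine (sum_le_sum_of_subset_of_nonneg (subset_univ S) fun _ _ _ => sq_nonneg _).trans ?_
    rw [← mul_assoc]
    simpa only [dotCount_erase_zero hα] using sum_sq_dotCount_mul_sub_le (notMem_erase 0 A) hα
  have hAS' : (#A : ℝ) * #S ≤ 100 / 99 * m * #S := by gcongr; linarith
  have hbm : b * m ^ 2 ≤ 25 / 396 * #S * m ^ 2 := by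
    calc b * m ^ 2 = 25 / 4 * (b * (m - 3 / 5 * m) ^ 2) := by ring
      _ ≤ 25 / 4 * (m * (q ^ Fintype.card n * q)) := by gcongr
      _ ≤ 25 / 4 * (m * (m * #S / 99)) := by rw [pow_succ] at hAS; gcongr; linarith
      _ = 25 / 396 * #S * m ^ 2 := by ring
  have hb : b ≤ 25 / 396 * #S := le_of_mul_le_mul_right hbm (by positivity)
  linarith [(Nat.cast_nonneg _ : (0 : ℝ) ≤ #S)]

theorem card_filter_dotProduct_eq_and_eq_ge {A₁ A₂ A₃ : Finset (n → F)} {α₁ α₂ : F}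
    (hα₁ : α₁ ≠ 0) (hα₂ : α₂ ≠ 0)
    (h₁₂ : 100 * (q : ℝ) ^ (Fintype.card n + 1) ≤ #A₁ * #A₂)
    (h₂₃ : 100 * (q : ℝ) ^ (Fintype.card n + 1) ≤ #A₂ * #A₃) :
    1 / 4 * ((q : ℝ) ^ 2)⁻¹ * (#A₁ * #A₂ * #A₃) ≤
      #{p ∈ A₁ ×ˢ A₂ ×ˢ A₃ | p.1 ⬝ᵥ p.2.1 = α₁ ∧ p.2.1 ⬝ᵥ p.2.2 = α₂} := by
  rw [mul_comm (#A₂ : ℝ)] at h₂₃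
  set m₁ : ℝ := (#(A₁.erase 0) : ℝ)
  set m₃ : ℝ := (#(A₃.erase 0) : ℝ)
  set N₁ : (n → F) → ℝ := fun x => dotCount A₁ α₁ x * q
  set N₃ : (n → F) → ℝ := fun x => dotCount A₃ α₂ x * q
  have hm₁ : 99 / 100 * (#A₁ : ℝ) ≤ m₁ := mul_card_le_card_erase_zero h₁₂
  have hm₃ : 99 / 100 * (#A₃ : ℝ) ≤ m₃ := mul_card_le_card_erase_zero h₂₃
  have hgood : (#A₂ : ℝ) ≤ #{x ∈ A₂ | 3 / 5 * m₁ ≤ N₁ x ∧ 3 / 5 * m₃ ≤ N₃ x}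
      + #{x ∈ A₂ | N₁ x < 3 / 5 * m₁} + #{x ∈ A₂ | N₃ x < 3 / 5 * m₃} := by
    have := card_le_card_filter_and_add A₂ (3 / 5 * m₁ ≤ N₁ ·) (3 / 5 * m₃ ≤ N₃ ·)
    simp only [not_le] at this
    exact_mod_cast this
  have hbad₁ := card_filter_dotCount_mul_lt_le A₂ hα₁ h₁₂
  have hbad₃ := card_filter_dotCount_mul_lt_le A₂ hα₂ h₂₃
  have hsum : #{x ∈ A₂ | 3 / 5 * m₁ ≤ N₁ x ∧ 3 / 5 * m₃ ≤ N₃ x} * (3 / 5 * m₁ * (3 / 5 * m₃))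
      ≤ #{p ∈ A₁ ×ˢ A₂ ×ˢ A₃ | p.1 ⬝ᵥ p.2.1 = α₁ ∧ p.2.1 ⬝ᵥ p.2.2 = α₂} * (q : ℝ) ^ 2 := by
    rw [card_filter_dotProduct_eq_and_eq]
    push_cast
    rw [sum_mul]
    convert card_filter_mul_le_sum_mul A₂ (f := N₁) (g := N₃) (a := 3 / 5 * m₁)
      (b := 3 / 5 * m₃) (fun _ _ => by positivity) (fun _ _ => by positivity) (by positivity)
      (by positivity) using 2 with x
    ring
  have hprod : (0 : ℝ) ≤ #A₁ * #A₂ * #A₃ := by positivity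
  rw [mul_comm (1 / 4 : ℝ), mul_assoc, inv_mul_le_iff₀ (by positivity)]
  calc 1 / 4 * (#A₁ * #A₂ * #A₃ : ℝ)
      ≤ 13 / 15 * #A₂ * (3 / 5 * (99 / 100 * #A₁) * (3 / 5 * (99 / 100 * #A₃))) := by linarith
    _ ≤ #{x ∈ A₂ | 3 / 5 * m₁ ≤ N₁ x ∧ 3 / 5 * m₃ ≤ N₃ x} * (3 / 5 * m₁ * (3 / 5 * m₃)) := by
        gcongr
        linarith
    _ ≤ _ := by rw [mul_comm _ ((q : ℝ) ^ 2)] at hsum; exact hsum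

end DotCount

theorem stmt14_general (F : Type) [Field F] [Fintype F] [DecidableEq F] (d : ℕ)
    (A₁ A₂ A₃ : Finset (Fin d → F))
    (h12 : 100 * (Fintype.card F : ℝ) ^ (d + 1) ≤ (A₁.card : ℝ) * (A₂.card : ℝ))
    (h23 : 100 * (Fintype.card F : ℝ) ^ (d + 1) ≤ (A₂.card : ℝ) * (A₃.card : ℝ))
    (α₁ α₂ : F) (hα₁ : α₁ ≠ 0) (hα₂ : α₂ ≠ 0) :
    (1 / 4 : ℝ) * ((Fintype.card F : ℝ) ^ 2)⁻¹ *
        ((A₁.card : ℝ) * (A₂.card : ℝ) * (A₃.card : ℝ)) ≤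
      (((A₁ ×ˢ A₂ ×ˢ A₃).filter fun p =>
        dotp p.1 p.2.1 = α₁ ∧ dotp p.2.1 p.2.2 = α₂).card : ℝ) ∧
    ∃ x₁ ∈ A₁, ∃ x₂ ∈ A₂, ∃ x₃ ∈ A₃, dotp x₁ x₂ = α₁ ∧ dotp x₂ x₃ = α₂ := by
  -- the lemma is stated with `⬝ᵥ`, which `dotp` unfolds to
  have hbound := card_filter_dotProduct_eq_and_eq_ge (A₂ := A₂) hα₁ hα₂
    (by rwa [Fintype.card_fin]) (by rwa [Fintype.card_fin])
  refine ⟨hbound, ?_⟩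
  have h₀ : (0 : ℝ) < 100 * (Fintype.card F : ℝ) ^ (d + 1) := by positivity
  have hpos : (0 : ℝ) < #A₁ * #A₂ * #A₃ :=
    mul_pos (h₀.trans_le h12) (pos_of_mul_pos_right (h₀.trans_le h23) (Nat.cast_nonneg _))
  obtain ⟨⟨x₁, x₂, x₃⟩, hp⟩ : ({p ∈ A₁ ×ˢ A₂ ×ˢ A₃ |
      dotp p.1 p.2.1 = α₁ ∧ dotp p.2.1 p.2.2 = α₂} : Finset _).Nonempty := by
    rw [← card_pos, ← Nat.cast_pos (α := ℝ)]
    exact (mul_pos (by positivity) hpos).trans_le hbound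
  simp only [mem_filter, mem_product] at hp
  exact ⟨x₁, hp.1.1, x₂, hp.1.2.1, x₃, hp.1.2.2, hp.2⟩

/-- If `|A_1||A_2| ≥ 100 q^{d+1}` and `|A_2||A_3| ≥ 100 q^{d+1}`, then for all
`α_1, α_2 ∈ 𝔽_q^*` the number of triples `(x_1,x_2,x_3) ∈ A_1 × A_2 × A_3` with
`x_1·x_2 = α_1` and `x_2·x_3 = α_2` is at least `(1/4) q^{-2} |A_1||A_2||A_3|`; in
particular such a triple exists. -/
theorem stmt14 (F : Type) [Field F] [Fintype F] [DecidableEq F] (d : ℕ) (hd : 1 ≤ d)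
    (A₁ A₂ A₃ : Finset (Fin d → F))
    (h12 : 100 * (Fintype.card F : ℝ) ^ (d + 1) ≤ (A₁.card : ℝ) * (A₂.card : ℝ))
    (h23 : 100 * (Fintype.card F : ℝ) ^ (d + 1) ≤ (A₂.card : ℝ) * (A₃.card : ℝ))
    (α₁ α₂ : F) (hα₁ : α₁ ≠ 0) (hα₂ : α₂ ≠ 0) :
    (1 / 4 : ℝ) * ((Fintype.card F : ℝ) ^ 2)⁻¹ *
        ((A₁.card : ℝ) * (A₂.card : ℝ) * (A₃.card : ℝ)) ≤
      (((A₁ ×ˢ A₂ ×ˢ A₃).filter fun p =>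
        dotp p.1 p.2.1 = α₁ ∧ dotp p.2.1 p.2.2 = α₂).card : ℝ) ∧
    ∃ x₁ ∈ A₁, ∃ x₂ ∈ A₂, ∃ x₃ ∈ A₃, dotp x₁ x₂ = α₁ ∧ dotp x₂ x₃ = α₂ :=
  stmt14_general F d A₁ A₂ A₃ h12 h23 α₁ α₂ hα₁ hα₂
end

section
/- Let q be a prime power, d ≥ 1 an integer, χ a nontrivial additive character of 𝔽_q, A_1, A_2, A_3 ⊆ 𝔽_q^d, and α_1, α_2 ∈ 𝔽_q with α_1 ≠ 0 and α_2 ≠ 0. Then |∑_{s, t ∈ 𝔽_q^*} ∑_{x_1 ∈ A_1} ∑_{x_2 ∈ A_2} ∑_{x_3 ∈ A_3} χ(s(x_1·x_2 − α_1)) · χ(t(x_2·x_3 − α_2))| ≤ q^{d+1}·|A_1|^{1/2}·|A_3|^{1/2}. -/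
section Aux
open Finset
set_option linter.unusedSectionVars false
set_option maxHeartbeats 1000000
variable {F : Type} [Field F] [Fintype F] [DecidableEq F] {d : ℕ}

lemma dotp_comm (x y : Fin d → F) : dotp x y = dotp y x :=
  Finset.sum_congr rfl fun i _ => mul_comm _ _

lemma char_sum_eq (χ : AddChar F ℂ) (hχ : χ ≠ 1) (c : F) :
    ∑ s : F, χ (s * c) = if c = 0 then (Fintype.card F : ℂ) else 0 := by
  rw [AddChar.sum_mulShift c (AddChar.IsPrimitive.of_ne_one hχ)]
  split <;> simp

lemma erase_char_sum (χ : AddChar F ℂ) (hχ : χ ≠ 1) (c : F) :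
    ∑ s ∈ Finset.univ.erase (0 : F), χ (s * c) =
      (if c = 0 then (Fintype.card F : ℂ) else 0) - 1 := by
  rw [Finset.sum_erase_eq_sub (Finset.mem_univ 0), char_sum_eq χ hχ]
  simp

lemma vec_char_sum (χ : AddChar F ℂ) (hχ : χ ≠ 1) (v : Fin d → F) :
    ∑ y : Fin d → F, χ (dotp v y) = if v = 0 then (Fintype.card F : ℂ) ^ d else 0 := by
  by_cases hv : v = 0
  · rw [if_pos hv]
    have : ∀ y : Fin d → F, dotp v y = 0 := fun y => by simp [hv, dotp]
    simp only [this, AddChar.map_zero_eq_one]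
    simp [Finset.card_univ]
  · rw [if_neg hv]
    obtain ⟨i, hi⟩ : ∃ i, v i ≠ 0 := by
      by_contra h; push_neg at h; exact hv (funext h)
    have hne := AddChar.IsPrimitive.of_ne_one hχ hi
    rw [AddChar.ne_one_iff] at hne
    obtain ⟨t, ht⟩ := hne
    rw [AddChar.mulShift_apply] at ht
    let ψ : AddChar (Fin d → F) ℂ :=
      { toFun := fun y => χ (dotp v y)
        map_zero_eq_one' := by simp [dotp]
        map_add_eq_mul' := fun y z => by
          show χ (dotp v (y + z)) = χ (dotp v y) * χ (dotp v z)
          have : dotp v (y + z) = dotp v y + dotp v z := by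
            unfold dotp
            rw [← Finset.sum_add_distrib]
            exact Finset.sum_congr rfl fun i _ => by simp [mul_add]
          rw [this, AddChar.map_add_eq_mul] }
    have hψ : ψ ≠ 1 := by
      rw [AddChar.ne_one_iff]
      refine ⟨Pi.single i t, ?_⟩
      show χ (dotp v (Pi.single i t)) ≠ 1
      have hdp : dotp v (Pi.single i t) = v i * t := by
        unfold dotp
        rw [Finset.sum_eq_single i (fun j _ hj => by simp [Pi.single_apply, hj]) (by simp)]
        simp
      rw [hdp]; exact ht
    exact AddChar.sum_eq_zero_of_ne_one hψ

lemma comb_arg (α s s' : F) (x x' y : Fin d → F) :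
    s * (dotp x y - α) + s' * (dotp x' y - α) =
      dotp (fun i => s * x i + s' * x' i) y + (-(s + s') * α) := by
  simp only [dotp, mul_sub, Finset.mul_sum]
  rw [show (∑ i, (fun i => s * x i + s' * x' i) i * y i)
      = ∑ i, (s * (x i * y i) + s' * (x' i * y i)) from
    Finset.sum_congr rfl fun i _ => by ring]
  rw [Finset.sum_add_distrib]
  ring

lemma zero_iff (s s' : F) (hs' : s' ≠ 0) (x x' : Fin d → F) :
    ((fun i => s * x i + s' * x' i) = 0) ↔ x' = fun i => (-s * s'⁻¹) * x i := by
  constructor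
  · intro h; funext i
    have := congrFun h i
    rw [Pi.zero_apply] at this
    field_simp at this ⊢
    linear_combination this
  · intro h; funext i
    rw [h]
    show s * x i + s' * (-s * s'⁻¹ * x i) = (0 : F)
    field_simp
    ring

lemma key_identity (χ : AddChar F ℂ) (hχ : χ ≠ 1) (A : Finset (Fin d → F)) {α : F}
    (hα : α ≠ 0) :
    ∑ y : Fin d → F,
        (∑ s ∈ Finset.univ.erase (0 : F), ∑ x ∈ A, χ (s * (dotp x y - α))) ^ 2
      = (Fintype.card F : ℂ) ^ d *
          ∑ x ∈ A, ((Fintype.card F : ℂ) - 1 -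
            ((((Finset.univ.erase (0 : F)).erase 1).filter
                (fun μ => (fun i => μ * x i) ∈ A)).card : ℂ)) := by
  classical
  set E : Finset F := Finset.univ.erase (0 : F) with hE
  have hsE : ∀ s ∈ E, s ≠ 0 := fun s hs => (Finset.mem_erase.mp hs).1
  -- Step 1: expand the square and pull the y-sum inside
  have step1 : ∑ y : Fin d → F, (∑ s ∈ E, ∑ x ∈ A, χ (s * (dotp x y - α))) ^ 2
      = ∑ p ∈ E ×ˢ A, ∑ p' ∈ E ×ˢ A, ∑ y : Fin d → F,
          χ (p.1 * (dotp p.2 y - α)) * χ (p'.1 * (dotp p'.2 y - α)) := by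
    have h1 : ∀ y : Fin d → F, (∑ s ∈ E, ∑ x ∈ A, χ (s * (dotp x y - α))) ^ 2
        = ∑ p ∈ E ×ˢ A, ∑ p' ∈ E ×ˢ A,
            χ (p.1 * (dotp p.2 y - α)) * χ (p'.1 * (dotp p'.2 y - α)) := by
      intro y
      rw [show (∑ s ∈ E, ∑ x ∈ A, χ (s * (dotp x y - α)))
          = ∑ p ∈ E ×ˢ A, χ (p.1 * (dotp p.2 y - α)) from
        (Finset.sum_product E A (fun p => χ (p.1 * (dotp p.2 y - α)))).symm]
      rw [sq, Finset.sum_mul_sum]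
    rw [Finset.sum_congr rfl fun y _ => h1 y]
    rw [Finset.sum_comm]
    exact Finset.sum_congr rfl fun p _ => Finset.sum_comm
  -- Step 2: evaluate the y-sum
  have step2 : ∀ p ∈ E ×ˢ A, ∀ p' ∈ E ×ˢ A,
      ∑ y : Fin d → F, χ (p.1 * (dotp p.2 y - α)) * χ (p'.1 * (dotp p'.2 y - α))
      = if p'.2 = (fun i => (-p.1 * p'.1⁻¹) * p.2 i)
          then χ (-(p.1 + p'.1) * α) * (Fintype.card F : ℂ) ^ d else 0 := by
    rintro ⟨s, x⟩ hp ⟨s', x'⟩ hp'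
    obtain ⟨hs, hx⟩ := Finset.mem_product.mp hp
    obtain ⟨hs', hx'⟩ := Finset.mem_product.mp hp'
    simp only
    have h2 : ∀ y : Fin d → F, χ (s * (dotp x y - α)) * χ (s' * (dotp x' y - α))
        = χ (dotp (fun i => s * x i + s' * x' i) y) * χ (-(s + s') * α) := by
      intro y
      rw [← AddChar.map_add_eq_mul, ← AddChar.map_add_eq_mul, comb_arg]
    rw [Finset.sum_congr rfl fun y _ => h2 y, ← Finset.sum_mul, vec_char_sum χ hχ]
    simp only [zero_iff s s' (hsE s' hs') x x']
    split <;> ring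
  -- Step 3: evaluate the x'-sum
  have e1 : ∀ G : F × (Fin d → F) → ℂ, ∑ p ∈ E ×ˢ A, G p = ∑ s ∈ E, ∑ x ∈ A, G (s, x) :=
    fun G => Finset.sum_product E A G
  have step3 : ∑ y : Fin d → F, (∑ s ∈ E, ∑ x ∈ A, χ (s * (dotp x y - α))) ^ 2
      = ∑ s ∈ E, ∑ x ∈ A, ∑ s' ∈ E,
          (if (fun i => (-s * s'⁻¹) * x i) ∈ A
            then χ (-(s + s') * α) * (Fintype.card F : ℂ) ^ d else 0) := by
    rw [step1, Finset.sum_congr rfl fun p hp => Finset.sum_congr rfl fun p' hp' =>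
      step2 p hp p' hp', e1]
    refine Finset.sum_congr rfl fun s _ => Finset.sum_congr rfl fun x _ => ?_
    rw [e1]
    refine Finset.sum_congr rfl fun s' _ => ?_
    exact Finset.sum_ite_eq' A (fun i => (-s * s'⁻¹) * x i)
      (fun _ => χ (-(s + s') * α) * (Fintype.card F : ℂ) ^ d)
  -- Step 4: reindex s' ↦ μ = -s * s'⁻¹
  have step4 : ∀ s ∈ E, ∀ x : Fin d → F, ∑ s' ∈ E,
        (if (fun i => (-s * s'⁻¹) * x i) ∈ A
          then χ (-(s + s') * α) * (Fintype.card F : ℂ) ^ d else 0)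
      = ∑ μ ∈ E, (if (fun i => μ * x i) ∈ A
          then χ (s * ((μ⁻¹ - 1) * α)) * (Fintype.card F : ℂ) ^ d else 0) := by
    intro s hs x
    have hs0 : s ≠ 0 := hsE s hs
    refine Finset.sum_nbij' (fun s' => -s * s'⁻¹) (fun μ => -s * μ⁻¹) ?_ ?_ ?_ ?_ ?_
    · intro s' hs'
      have h0 : s' ≠ 0 := hsE s' hs'
      simp only [hE, Finset.mem_erase, Finset.mem_univ, and_true]
      exact mul_ne_zero (neg_ne_zero.mpr hs0) (inv_ne_zero h0)
    · intro μ hμ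
      have h0 : μ ≠ 0 := hsE μ hμ
      simp only [hE, Finset.mem_erase, Finset.mem_univ, and_true]
      exact mul_ne_zero (neg_ne_zero.mpr hs0) (inv_ne_zero h0)
    · intro s' hs'
      have h0 : s' ≠ 0 := hsE s' hs'
      field_simp
    · intro μ hμ
      have h0 : μ ≠ 0 := hsE μ hμ
      field_simp
    · intro s' hs'
      have h0 : s' ≠ 0 := hsE s' hs'
      have harg : -(s + s') * α = s * (((-s * s'⁻¹)⁻¹ - 1) * α) := by
        rw [mul_inv, inv_neg, inv_inv]
        field_simp
        ring
      simp only [harg]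
  -- Step 5: sum over s
  have step5 : ∑ y : Fin d → F, (∑ s ∈ E, ∑ x ∈ A, χ (s * (dotp x y - α))) ^ 2
      = ∑ x ∈ A, ∑ μ ∈ E, (if (fun i => μ * x i) ∈ A
          then ((if μ = 1 then (Fintype.card F : ℂ) else 0) - 1) * (Fintype.card F : ℂ) ^ d
          else 0) := by
    rw [step3, Finset.sum_congr rfl fun s hs => Finset.sum_congr rfl fun x _ => step4 s hs x,
      Finset.sum_comm]
    refine Finset.sum_congr rfl fun x _ => ?_
    rw [Finset.sum_comm]
    refine Finset.sum_congr rfl fun μ hμ => ?_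
    by_cases hC : (fun i => μ * x i) ∈ A
    · simp only [if_pos hC]
      rw [← Finset.sum_mul, erase_char_sum χ hχ]
      have hiff : (μ⁻¹ - 1) * α = 0 ↔ μ = 1 := by
        rw [mul_eq_zero, sub_eq_zero, inv_eq_one]
        simp [hα]
      simp only [hiff]
    · simp only [if_neg hC, Finset.sum_const_zero]
  -- Step 6: split off μ = 1
  rw [step5, Finset.mul_sum]
  refine Finset.sum_congr rfl fun x hx => ?_
  have h1E : (1 : F) ∈ E := Finset.mem_erase.mpr ⟨one_ne_zero, Finset.mem_univ _⟩
  rw [← Finset.add_sum_erase E _ h1E]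
  have hx1 : (fun i => (1 : F) * x i) = x := funext fun i => one_mul _
  simp only [hx1, if_pos hx, if_pos rfl]
  have hrest : ∀ μ ∈ E.erase 1,
      (if (fun i => μ * x i) ∈ A
        then ((if μ = (1:F) then (Fintype.card F : ℂ) else 0) - 1) * (Fintype.card F : ℂ) ^ d
        else 0)
      = if (fun i => μ * x i) ∈ A then -((Fintype.card F : ℂ) ^ d) else 0 := by
    intro μ hμ
    rw [if_neg (Finset.mem_erase.mp hμ).1]
    split <;> ring
  rw [Finset.sum_congr rfl hrest, ← Finset.sum_filter, Finset.sum_const, nsmul_eq_mul]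
  rw [if_pos trivial]
  ring

lemma inner_eq (χ : AddChar F ℂ) (hχ : χ ≠ 1) (A : Finset (Fin d → F)) (α : F)
    (y : Fin d → F) :
    ∑ s ∈ Finset.univ.erase (0 : F), ∑ x ∈ A, χ (s * (dotp x y - α)) =
      (((Fintype.card F : ℝ) * ((A.filter fun x => dotp x y = α).card : ℝ)
        - (A.card : ℝ) : ℝ) : ℂ) := by
  rw [Finset.sum_comm]
  have h : ∀ x ∈ A, ∑ s ∈ Finset.univ.erase (0 : F), χ (s * (dotp x y - α)) =
      (if dotp x y = α then (Fintype.card F : ℂ) else 0) - 1 := by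
    intro x _
    rw [erase_char_sum χ hχ]
    congr 1
    simp [sub_eq_zero]
  rw [Finset.sum_congr rfl h, Finset.sum_sub_distrib]
  rw [← Finset.sum_filter]
  simp [mul_comm]

lemma moment (χ : AddChar F ℂ) (hχ : χ ≠ 1) (A : Finset (Fin d → F)) {α : F} (hα : α ≠ 0) :
    ∑ y : Fin d → F,
        ((Fintype.card F : ℝ) * ((A.filter fun x => dotp x y = α).card : ℝ)
          - (A.card : ℝ)) ^ 2
      ≤ (Fintype.card F : ℝ) ^ (d + 1) * (A.card : ℝ) := by
  classical
  set m : (Fin d → F) → ℕ := fun x =>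
    ((((Finset.univ.erase (0 : F)).erase 1).filter (fun μ => (fun i => μ * x i) ∈ A)).card)
    with hm
  have hre : ∑ y : Fin d → F,
      ((Fintype.card F : ℝ) * ((A.filter fun x => dotp x y = α).card : ℝ) - (A.card : ℝ)) ^ 2
      = (Fintype.card F : ℝ) ^ d * ∑ x ∈ A, ((Fintype.card F : ℝ) - 1 - (m x : ℝ)) := by
    apply Complex.ofReal_injective
    have hL : ((∑ y : Fin d → F,
        ((Fintype.card F : ℝ) * ((A.filter fun x => dotp x y = α).card : ℝ)
          - (A.card : ℝ)) ^ 2 : ℝ) : ℂ)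
        = ∑ y : Fin d → F,
            (∑ s ∈ Finset.univ.erase (0 : F), ∑ x ∈ A, χ (s * (dotp x y - α))) ^ 2 := by
      push_cast
      exact Finset.sum_congr rfl fun y _ => by rw [inner_eq χ hχ A α y]; push_cast; ring
    rw [hL, key_identity χ hχ A hα]
    push_cast
    rfl
  rw [hre]
  have hq1 : (1 : ℝ) ≤ (Fintype.card F : ℝ) := by
    exact_mod_cast Fintype.card_pos
  have hsum : ∑ x ∈ A, ((Fintype.card F : ℝ) - 1 - (m x : ℝ))
      ≤ (A.card : ℝ) * (Fintype.card F : ℝ) := by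
    calc ∑ x ∈ A, ((Fintype.card F : ℝ) - 1 - (m x : ℝ))
        ≤ ∑ x ∈ A, (Fintype.card F : ℝ) := by
          refine Finset.sum_le_sum fun x _ => ?_
          have : (0:ℝ) ≤ (m x : ℝ) := Nat.cast_nonneg _
          linarith
      _ = (A.card : ℝ) * (Fintype.card F : ℝ) := by
          rw [Finset.sum_const, nsmul_eq_mul]
  calc (Fintype.card F : ℝ) ^ d * ∑ x ∈ A, ((Fintype.card F : ℝ) - 1 - (m x : ℝ))
      ≤ (Fintype.card F : ℝ) ^ d * ((A.card : ℝ) * (Fintype.card F : ℝ)) :=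
        mul_le_mul_of_nonneg_left hsum (by positivity)
    _ = (Fintype.card F : ℝ) ^ (d + 1) * (A.card : ℝ) := by rw [pow_succ]; ring

end Aux

/-- For `A_1, A_2, A_3 ⊆ 𝔽_q^d` and nonzero `α_1, α_2`,
`|∑_{s,t ∈ 𝔽_q^*} ∑_{x_1 ∈ A_1} ∑_{x_2 ∈ A_2} ∑_{x_3 ∈ A_3}
  χ(s(x_1·x_2 − α_1)) χ(t(x_2·x_3 − α_2))| ≤ q^{d+1} |A_1|^{1/2} |A_3|^{1/2}`. -/
theorem stmt15 (F : Type) [Field F] [Fintype F] [DecidableEq F] (d : ℕ) (hd : 1 ≤ d)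
    (χ : AddChar F ℂ) (hχ : χ ≠ 1) (A₁ A₂ A₃ : Finset (Fin d → F))
    (α₁ α₂ : F) (hα₁ : α₁ ≠ 0) (hα₂ : α₂ ≠ 0) :
    ‖∑ s ∈ Finset.univ.erase (0 : F), ∑ t ∈ Finset.univ.erase (0 : F),
        ∑ x₁ ∈ A₁, ∑ x₂ ∈ A₂, ∑ x₃ ∈ A₃,
          χ (s * (dotp x₁ x₂ - α₁)) * χ (t * (dotp x₂ x₃ - α₂))‖ ≤
      (Fintype.card F : ℝ) ^ (d + 1) *
        ((A₁.card : ℝ) ^ ((1 : ℝ) / 2) * (A₃.card : ℝ) ^ ((1 : ℝ) / 2)) := by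
  classical
  set E : Finset F := Finset.univ.erase (0 : F) with hE
  set g₁ : (Fin d → F) → ℝ := fun y =>
    (Fintype.card F : ℝ) * ((A₁.filter fun x => dotp x y = α₁).card : ℝ) - (A₁.card : ℝ)
    with hg₁
  set g₃ : (Fin d → F) → ℝ := fun y =>
    (Fintype.card F : ℝ) * ((A₃.filter fun x => dotp x y = α₂).card : ℝ) - (A₃.card : ℝ)
    with hg₃
  -- Step 1: reorganize the sum
  have hswap : ∑ s ∈ E, ∑ t ∈ E, ∑ x₁ ∈ A₁, ∑ x₂ ∈ A₂, ∑ x₃ ∈ A₃,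
        χ (s * (dotp x₁ x₂ - α₁)) * χ (t * (dotp x₂ x₃ - α₂))
      = ∑ x₂ ∈ A₂,
          (∑ s ∈ E, ∑ x₁ ∈ A₁, χ (s * (dotp x₁ x₂ - α₁))) *
          (∑ t ∈ E, ∑ x₃ ∈ A₃, χ (t * (dotp x₃ x₂ - α₂))) := by
    calc ∑ s ∈ E, ∑ t ∈ E, ∑ x₁ ∈ A₁, ∑ x₂ ∈ A₂, ∑ x₃ ∈ A₃,
          χ (s * (dotp x₁ x₂ - α₁)) * χ (t * (dotp x₂ x₃ - α₂))
        = ∑ s ∈ E, ∑ t ∈ E, ∑ x₂ ∈ A₂, ∑ x₁ ∈ A₁, ∑ x₃ ∈ A₃,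
            χ (s * (dotp x₁ x₂ - α₁)) * χ (t * (dotp x₃ x₂ - α₂)) := by
          refine Finset.sum_congr rfl fun s _ => Finset.sum_congr rfl fun t _ => ?_
          rw [show (∑ x₁ ∈ A₁, ∑ x₂ ∈ A₂, ∑ x₃ ∈ A₃,
              χ (s * (dotp x₁ x₂ - α₁)) * χ (t * (dotp x₂ x₃ - α₂)))
            = ∑ x₁ ∈ A₁, ∑ x₂ ∈ A₂, ∑ x₃ ∈ A₃,
              χ (s * (dotp x₁ x₂ - α₁)) * χ (t * (dotp x₃ x₂ - α₂)) from
            Finset.sum_congr rfl fun x₁ _ => Finset.sum_congr rfl fun x₂ _ =>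
              Finset.sum_congr rfl fun x₃ _ => by rw [dotp_comm x₂ x₃]]
          exact Finset.sum_comm
      _ = ∑ s ∈ E, ∑ x₂ ∈ A₂, ∑ t ∈ E, ∑ x₁ ∈ A₁, ∑ x₃ ∈ A₃,
            χ (s * (dotp x₁ x₂ - α₁)) * χ (t * (dotp x₃ x₂ - α₂)) :=
          Finset.sum_congr rfl fun s _ => Finset.sum_comm
      _ = ∑ x₂ ∈ A₂, ∑ s ∈ E, ∑ t ∈ E, ∑ x₁ ∈ A₁, ∑ x₃ ∈ A₃,
            χ (s * (dotp x₁ x₂ - α₁)) * χ (t * (dotp x₃ x₂ - α₂)) := Finset.sum_comm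
      _ = ∑ x₂ ∈ A₂,
            (∑ s ∈ E, ∑ x₁ ∈ A₁, χ (s * (dotp x₁ x₂ - α₁))) *
            (∑ t ∈ E, ∑ x₃ ∈ A₃, χ (t * (dotp x₃ x₂ - α₂))) := by
          refine Finset.sum_congr rfl fun x₂ _ => ?_
          rw [Finset.sum_mul_sum]
          exact Finset.sum_congr rfl fun s _ => Finset.sum_congr rfl fun t _ =>
            (Finset.sum_mul_sum _ _ _ _).symm
  -- Step 2: the summand is real
  have hreal : ∑ x₂ ∈ A₂,
        (∑ s ∈ E, ∑ x₁ ∈ A₁, χ (s * (dotp x₁ x₂ - α₁))) *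
        (∑ t ∈ E, ∑ x₃ ∈ A₃, χ (t * (dotp x₃ x₂ - α₂)))
      = ((∑ x₂ ∈ A₂, g₁ x₂ * g₃ x₂ : ℝ) : ℂ) := by
    push_cast
    refine Finset.sum_congr rfl fun x₂ _ => ?_
    rw [inner_eq χ hχ A₁ α₁ x₂, inner_eq χ hχ A₃ α₂ x₂]
  rw [hswap, hreal, Complex.norm_real, Real.norm_eq_abs]
  -- Step 3: real estimates
  have habs : |∑ x₂ ∈ A₂, g₁ x₂ * g₃ x₂| ≤ ∑ y : Fin d → F, |g₁ y| * |g₃ y| := by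
    calc |∑ x₂ ∈ A₂, g₁ x₂ * g₃ x₂| ≤ ∑ x₂ ∈ A₂, |g₁ x₂ * g₃ x₂| :=
          Finset.abs_sum_le_sum_abs _ _
      _ = ∑ x₂ ∈ A₂, |g₁ x₂| * |g₃ x₂| := by
          exact Finset.sum_congr rfl fun x₂ _ => abs_mul _ _
      _ ≤ ∑ y : Fin d → F, |g₁ y| * |g₃ y| := by
          refine Finset.sum_le_sum_of_subset_of_nonneg (Finset.subset_univ _) fun y _ _ => ?_
          positivity
  have hCS : (∑ y : Fin d → F, |g₁ y| * |g₃ y|) ^ 2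
      ≤ ((Fintype.card F : ℝ) ^ (d + 1) * (A₁.card : ℝ)) *
        ((Fintype.card F : ℝ) ^ (d + 1) * (A₃.card : ℝ)) := by
    calc (∑ y : Fin d → F, |g₁ y| * |g₃ y|) ^ 2
        ≤ (∑ y : Fin d → F, |g₁ y| ^ 2) * (∑ y : Fin d → F, |g₃ y| ^ 2) :=
          Finset.sum_mul_sq_le_sq_mul_sq _ _ _
      _ = (∑ y : Fin d → F, g₁ y ^ 2) * (∑ y : Fin d → F, g₃ y ^ 2) := by
          simp [sq_abs]
      _ ≤ ((Fintype.card F : ℝ) ^ (d + 1) * (A₁.card : ℝ)) *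
          ((Fintype.card F : ℝ) ^ (d + 1) * (A₃.card : ℝ)) := by
          refine mul_le_mul (moment χ hχ A₁ hα₁) (moment χ hχ A₃ hα₂)
            (Finset.sum_nonneg fun y _ => sq_nonneg _) (by positivity)
  have hRHSnn : (0:ℝ) ≤ (Fintype.card F : ℝ) ^ (d + 1) *
      ((A₁.card : ℝ) ^ ((1 : ℝ) / 2) * (A₃.card : ℝ) ^ ((1 : ℝ) / 2)) := by positivity
  have hsq : ((Fintype.card F : ℝ) ^ (d + 1) *
      ((A₁.card : ℝ) ^ ((1 : ℝ) / 2) * (A₃.card : ℝ) ^ ((1 : ℝ) / 2))) ^ 2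
      = ((Fintype.card F : ℝ) ^ (d + 1) * (A₁.card : ℝ)) *
        ((Fintype.card F : ℝ) ^ (d + 1) * (A₃.card : ℝ)) := by
    rw [← Real.sqrt_eq_rpow, ← Real.sqrt_eq_rpow]
    rw [mul_pow, mul_pow, Real.sq_sqrt (Nat.cast_nonneg _), Real.sq_sqrt (Nat.cast_nonneg _)]
    ring
  have hfin : ∑ y : Fin d → F, |g₁ y| * |g₃ y|
      ≤ (Fintype.card F : ℝ) ^ (d + 1) *
        ((A₁.card : ℝ) ^ ((1 : ℝ) / 2) * (A₃.card : ℝ) ^ ((1 : ℝ) / 2)) := by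
    have hnn : (0:ℝ) ≤ ∑ y : Fin d → F, |g₁ y| * |g₃ y| :=
      Finset.sum_nonneg fun y _ => by positivity
    nlinarith [hCS, hsq, hRHSnn, hnn]
  linarith [habs, hfin]
end
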